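/- arXiv:2303.00058 — 7 statements merged into one kernel-verified Lean document; each statement's English description precedes it below -/
import Mathlib

section
/- Let A ∈ ℝ₊^{r×s} have full column rank, let x ∈ ℝ₊^r, and let T be the support (set of indices of strictly positive entries) of the unique nonnegative least squares solution q(A,x) = argmin_{s ≥ 0} ‖x − As‖₂. Then the restriction of q(A,x) to T equals (A_{:,T})† x, where A_{:,T} is the submatrix of columns of A indexed by T and † denotes the Moore–Penrose pseudoinverse, and q(A,x) is zero outside T. -/
/-!
On its support `T` the NNLS solution `q` is an interior point of the constraint set in the
directions `e_j`, `j ∈ T`, so the derivative of the objective along `e_j` vanishes there: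
`(Aᵀ (x - A q))_j = 0`. Since `q` vanishes off `T`, `A q = A_{:,T} q_T`, and these are the normal
equations `A_{:,T}ᵀ A_{:,T} q_T = A_{:,T}ᵀ x`. Full column rank of `A` passes to `A_{:,T}`, whose
Gram matrix is therefore invertible, and solving gives `q_T = (A_{:,T})† x`.
-/

open Matrix
/-- Moore–Penrose pseudoinverse of a full-column-rank real matrix. -/
noncomputable def pinv {m n : Type*} [Fintype m] [Fintype n] [DecidableEq n]
    (A : Matrix m n ℝ) : Matrix n m ℝ := (Aᵀ * A)⁻¹ * Aᵀ

/-- `v` is the nonnegative least squares solution for `A`, `x`. -/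
def IsNNLS {r s : ℕ} (A : Matrix (Fin r) (Fin s) ℝ) (x : Fin r → ℝ) (v : Fin s → ℝ) : Prop :=
  (∀ j, 0 ≤ v j) ∧
    ∀ w : Fin s → ℝ, (∀ j, 0 ≤ w j) →
      ∑ i, (x i - A.mulVec v i) ^ 2 ≤ ∑ i, (x i - A.mulVec w i) ^ 2

open Filter Topology

theorem eq_zero_of_eventually_nonneg_mul_add_mul_sq {a b : ℝ}
    (h : ∀ᶠ t in 𝓝 0, 0 ≤ a * t + b * t ^ 2) : a = 0 := by
  have hmin : IsLocalMin (fun t : ℝ => a * t + b * t ^ 2) 0 := by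
    filter_upwards [h] with t ht
    simpa using ht
  have hderiv : HasDerivAt (fun t : ℝ => a * t + b * t ^ 2) a 0 := by
    simpa using
      ((hasDerivAt_id' (0 : ℝ)).const_mul a).fun_add ((hasDerivAt_pow 2 (0 : ℝ)).const_mul b)
  exact hmin.hasDerivAt_eq_zero hderiv

namespace Matrix

variable {m n : Type*} [Fintype n]

theorem linearIndependent_col_of_rank_eq_card {K : Type*} [Field K] {A : Matrix m n K}
    (h : A.rank = Fintype.card n) : LinearIndependent K A.col :=
  linearIndependent_iff_card_eq_finrank_span.mpr <| by
    rw [Set.finrank, ← rank_eq_finrank_span_cols, h]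

theorem submatrix_val_mulVec_of_eq_zero_off {R : Type*} [NonUnitalNonAssocSemiring R]
    (A : Matrix m n R) (T : Finset n) {v : n → R} (hv : ∀ j ∉ T, v j = 0) :
    A.submatrix id (Subtype.val : T → n) *ᵥ (fun j => v j) = A *ᵥ v := by
  ext i
  simp only [mulVec, dotProduct, submatrix_apply, id]
  rw [Finset.sum_coe_sort T (fun j => A i j * v j)]
  exact Finset.sum_subset (Finset.subset_univ T) fun j _ hj => by simp [hv j hj]

variable [Fintype m] [DecidableEq n]

theorem isUnit_transpose_mul_self {K : Type*} [Field K] [LinearOrder K] [IsStrictOrderedRing K]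
    {A : Matrix m n K} (hA : LinearIndependent K A.col) : IsUnit (Aᵀ * A) := by
  have hker : LinearMap.ker A.mulVecLin = ⊥ :=
    LinearMap.ker_eq_bot.mpr (mulVec_injective_iff.mpr hA)
  rw [← mulVec_injective_iff_isUnit]
  exact LinearMap.ker_eq_bot.mp ((ker_mulVecLin_transpose_mul_self A).trans hker)

theorem eq_pinv_mulVec_of_transpose_mulVec_sub_eq_zero {A : Matrix m n ℝ}
    (hA : LinearIndependent ℝ A.col) {x : m → ℝ} {u : n → ℝ} (h : Aᵀ *ᵥ (x - A *ᵥ u) = 0) :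
    u = pinv A *ᵥ x := by
  have hdet : IsUnit (Aᵀ * A).det := (isUnit_iff_isUnit_det _).mp (isUnit_transpose_mul_self hA)
  rw [mulVec_sub, sub_eq_zero, mulVec_mulVec] at h
  rw [pinv, ← mulVec_mulVec, h, mulVec_mulVec, nonsing_inv_mul _ hdet, one_mulVec]

end Matrix

theorem IsNNLS.transpose_mulVec_sub_eq_zero {r s : ℕ} {A : Matrix (Fin r) (Fin s) ℝ}
    {x : Fin r → ℝ} {q : Fin s → ℝ} (hq : IsNNLS A x q) {j : Fin s} (hj : 0 < q j) :
    (Aᵀ *ᵥ (x - A *ᵥ q)) j = 0 := by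
  set c := (Aᵀ *ᵥ (x - A *ᵥ q)) j
  have hperturb : ∀ t : ℝ, ∑ i, (x i - (A *ᵥ (q + t • Pi.single j 1)) i) ^ 2 =
      ∑ i, (x i - (A *ᵥ q) i) ^ 2 + (-2 * c * t + (∑ i, A i j ^ 2) * t ^ 2) := by
    intro t
    rw [mulVec_add, mulVec_smul, mulVec_single_one]
    simp only [c, mulVec_transpose, vecMul, dotProduct, Pi.add_apply, Pi.smul_apply, Pi.sub_apply,
      smul_eq_mul, col_apply, Finset.mul_sum, Finset.sum_mul, ← Finset.sum_add_distrib]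
    exact Finset.sum_congr rfl fun i _ => by ring
  have hnonneg : ∀ᶠ t in 𝓝 0, 0 ≤ -2 * c * t + (∑ i, A i j ^ 2) * t ^ 2 := by
    filter_upwards [lt_mem_nhds (neg_lt_zero.mpr hj)] with t ht
    have hw : ∀ k, 0 ≤ (q + t • Pi.single j 1 : Fin s → ℝ) k := by
      intro k
      rcases eq_or_ne k j with rfl | hk
      · simp only [Pi.add_apply, Pi.smul_apply, Pi.single_eq_same, smul_eq_mul, mul_one]
        linarith
      · simpa [hk] using hq.1 k
    have hmin := hq.2 _ hw
    rw [hperturb] at hmin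
    linarith
  linarith [eq_zero_of_eventually_nonneg_mul_add_mul_sq hnonneg]

theorem nnls_support_formula_general {r s : ℕ} (A : Matrix (Fin r) (Fin s) ℝ)
    (hArank : A.rank = s)
    (x : Fin r → ℝ)
    (qv : Fin s → ℝ) (hq : IsNNLS A x qv)
    (T : Finset (Fin s)) (hT : T = Finset.univ.filter (fun j => 0 < qv j)) :
    (∀ j (hj : j ∈ T),
        qv j =
          (pinv (A.submatrix id (Subtype.val : {j // j ∈ T} → Fin s))).mulVec x ⟨j, hj⟩) ∧
      ∀ j, j ∉ T → qv j = 0 := by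
  have hoff : ∀ j ∉ T, qv j = 0 := fun j hj => le_antisymm (by simpa [hT] using hj) (hq.1 j)
  set B := A.submatrix id (Subtype.val : {j // j ∈ T} → Fin s)
  have hB : LinearIndependent ℝ B.col :=
    (linearIndependent_col_of_rank_eq_card (by simpa using hArank)).comp Subtype.val
      Subtype.val_injective
  have hnormal : Bᵀ *ᵥ (x - B *ᵥ fun j => qv j) = 0 := by
    rw [submatrix_val_mulVec_of_eq_zero_off A T hoff]
    ext ⟨j, hj⟩
    exact hq.transpose_mulVec_sub_eq_zero (by simpa [hT] using hj)
  have hsolve := eq_pinv_mulVec_of_transpose_mulVec_sub_eq_zero hB hnormal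
  exact ⟨fun j hj => congrFun hsolve ⟨j, hj⟩, hoff⟩

/-- on its support `T`, `q(A,x)` equals `(A_{:,T})† x`; off `T` it is zero. -/
theorem nnls_support_formula {r s : ℕ} (hrs : s ≤ r) (A : Matrix (Fin r) (Fin s) ℝ)
    (hA0 : ∀ i j, 0 ≤ A i j) (hArank : A.rank = s)
    (x : Fin r → ℝ) (hx0 : ∀ i, 0 ≤ x i)
    (qv : Fin s → ℝ) (hq : IsNNLS A x qv)
    (T : Finset (Fin s)) (hT : T = Finset.univ.filter (fun j => 0 < qv j)) :
    (∀ j (hj : j ∈ T),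
        qv j =
          (pinv (A.submatrix id (Subtype.val : {j // j ∈ T} → Fin s))).mulVec x ⟨j, hj⟩) ∧
      ∀ j, j ∉ T → qv j = 0 :=
  nnls_support_formula_general A hArank x qv hq T hT
end

section
/- Let A ∈ ℝ₊^{r×s} have full column rank, x ∈ ℝ₊^r, and T = supp q(A,x) where q(A,x) = argmin_{s≥0} ‖x − As‖₂. Then the submatrix A_{:,T} also has full column rank, and q(A,x)_T is the unique global minimizer of w ↦ ‖x − A_{:,T} w‖₂ over all w ∈ ℝ^{|T|} (in particular the unconstrained least squares solution on the support is automatically nonnegative). -/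
namespace Matrix

variable {m n R : Type*} [Fintype n]

theorem linearIndependent_col_iff_rank_eq [Field R] {A : Matrix m n R} :
    LinearIndependent R A.col ↔ A.rank = Fintype.card n := by
  rw [rank_eq_finrank_span_cols, linearIndependent_iff_card_eq_finrank_span, eq_comm]
  rfl

theorem submatrix_subtype_val_mulVec_of_support_subset [NonUnitalNonAssocSemiring R]
    (A : Matrix m n R) {T : Finset n} {q : n → R} (hq : Function.support q ⊆ T) :
    A.submatrix id (Subtype.val : T → n) *ᵥ (fun t => q t) = A *ᵥ q := by
  ext i
  simp only [mulVec, dotProduct, submatrix_apply, id_eq]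
  rw [Finset.sum_coe_sort T (fun j => A i j * q j)]
  refine Finset.sum_subset T.subset_univ fun j _ hj => ?_
  rw [Function.notMem_support.mp (mt (@hq j) hj), mul_zero]

variable [Fintype m]

theorem sub_mulVec_dotProduct_self_eq [CommRing R] (B : Matrix m n R) (x : m → R) {q : n → R}
    (h : (x - B *ᵥ q) ᵥ* B = 0) (w : n → R) :
    (x - B *ᵥ w) ⬝ᵥ (x - B *ᵥ w) =
      (x - B *ᵥ q) ⬝ᵥ (x - B *ᵥ q) + B *ᵥ (w - q) ⬝ᵥ B *ᵥ (w - q) := by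
  have hsplit : x - B *ᵥ w = (x - B *ᵥ q) - B *ᵥ (w - q) := by rw [mulVec_sub]; abel
  have horth : (x - B *ᵥ q) ⬝ᵥ B *ᵥ (w - q) = 0 := by rw [dotProduct_mulVec, h, zero_dotProduct]
  rw [hsplit]
  generalize x - B *ᵥ q = e, B *ᵥ (w - q) = d at horth ⊢
  simp only [sub_dotProduct, dotProduct_sub, dotProduct_comm d e, horth]
  ring

theorem sum_sq_sub_mulVec_lt_of_ne {B : Matrix m n ℝ} (hB : Function.Injective B.mulVec)
    {x : m → ℝ} {q w : n → ℝ} (h : (x - B *ᵥ q) ᵥ* B = 0) (hw : w ≠ q) :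
    ∑ i, (x i - (B *ᵥ q) i) ^ 2 < ∑ i, (x i - (B *ᵥ w) i) ^ 2 := by
  have hsq (v : m → ℝ) : ∑ i, v i ^ 2 = v ⬝ᵥ v := by simp only [dotProduct, sq]
  have hpos : 0 < B *ᵥ (w - q) ⬝ᵥ B *ᵥ (w - q) := by
    refine lt_of_le_of_ne (Finset.sum_nonneg fun i _ => mul_self_nonneg _) (Ne.symm ?_)
    rw [Ne, dotProduct_self_eq_zero, ← mulVec_zero B]
    exact hB.ne (sub_ne_zero.mpr hw)
  have := sub_mulVec_dotProduct_self_eq B x h w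
  simp only [← Pi.sub_apply, hsq]
  linarith

end Matrix

open Matrix

theorem dotProduct_eq_zero_of_isLocalMin {m : Type*} [Fintype m] {r a : m → ℝ}
    (h : IsLocalMin (fun t : ℝ => ∑ i, (r i - t * a i) ^ 2) 0) : r ⬝ᵥ a = 0 := by
  have hderiv : HasDerivAt (fun t : ℝ => ∑ i, (r i - t * a i) ^ 2)
      (∑ i, 2 * (r i - 0 * a i) ^ 1 * (0 - 1 * a i)) 0 :=
    HasDerivAt.fun_sum fun i _ =>
      ((hasDerivAt_const _ _).sub ((hasDerivAt_id _).mul_const _)).pow 2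
  simpa only [zero_mul, sub_zero, pow_one, one_mul, zero_sub, mul_neg, Finset.sum_neg_distrib,
    neg_eq_zero, mul_assoc, ← Finset.mul_sum, mul_eq_zero, two_ne_zero, false_or, dotProduct]
    using h.hasDerivAt_eq_zero hderiv

theorem IsNNLS.vecMul_residual_apply_eq_zero {r s : ℕ} {A : Matrix (Fin r) (Fin s) ℝ}
    {x : Fin r → ℝ} {v : Fin s → ℝ} (hv : IsNNLS A x v) {j : Fin s} (hj : 0 < v j) :
    ((x - A *ᵥ v) ᵥ* A) j = 0 := by
  -- `v + t eⱼ` stays feasible for `t > -v j`, so `t = 0` is a two-sided local minimum.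
  refine dotProduct_eq_zero_of_isLocalMin (a := A.col j) ?_
  filter_upwards [Ioi_mem_nhds (neg_lt_zero.mpr hj)] with t ht
  have hnonneg : ∀ k, 0 ≤ (v + Pi.single j t : Fin s → ℝ) k := by
    intro k
    rcases eq_or_ne k j with rfl | hk
    · simpa [neg_le_iff_add_nonneg'] using (Set.mem_Ioi.mp ht).le
    · simpa [hk] using hv.1 k
  have hshift (i : Fin r) :
      x i - (A *ᵥ (v + Pi.single j t)) i = (x - A *ᵥ v) i - t * A.col j i := by
    simp only [mulVec_add, mulVec_single, op_smul_eq_smul, Pi.add_apply, Pi.smul_apply, col_apply,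
      smul_eq_mul, Pi.sub_apply]
    ring
  simpa only [hshift, zero_mul, sub_zero, Pi.sub_apply] using hv.2 _ hnonneg

theorem nnls_support_unconstrained_general {r s : ℕ} (A : Matrix (Fin r) (Fin s) ℝ)
    (hArank : A.rank = s)
    (x : Fin r → ℝ)
    (qv : Fin s → ℝ) (hq : IsNNLS A x qv)
    (T : Finset (Fin s)) (hT : T = Finset.univ.filter (fun j => 0 < qv j)) :
    (A.submatrix id (Subtype.val : {j // j ∈ T} → Fin s)).rank = T.card ∧
      ∀ w : {j // j ∈ T} → ℝ, w ≠ (fun t => qv t.1) →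
        ∑ i, (x i - (A.submatrix id (Subtype.val : {j // j ∈ T} → Fin s)).mulVec
            (fun t => qv t.1) i) ^ 2 <
          ∑ i, (x i - (A.submatrix id (Subtype.val : {j // j ∈ T} → Fin s)).mulVec w i) ^ 2 := by
  set B := A.submatrix id (Subtype.val : {j // j ∈ T} → Fin s)
  have hBcol : LinearIndependent ℝ B.col :=
    ((linearIndependent_col_iff_rank_eq (A := A)).mpr (by simpa using hArank)).comp _
      Subtype.val_injective
  have hsupp : Function.support qv ⊆ T := fun j hj =>
    hT ▸ Finset.mem_filter.mpr ⟨Finset.mem_univ j, (hq.1 j).lt_of_ne' hj⟩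
  have hBq : B *ᵥ (fun t => qv t.1) = A *ᵥ qv :=
    A.submatrix_subtype_val_mulVec_of_support_subset hsupp
  refine ⟨by simpa using linearIndependent_col_iff_rank_eq.mp hBcol, fun w hw => ?_⟩
  refine sum_sq_sub_mulVec_lt_of_ne (mulVec_injective_iff.mpr hBcol) ?_ hw
  ext t
  rw [hBq]
  exact hq.vecMul_residual_apply_eq_zero (by simpa [hT] using t.2)

/-- `A_{:,T}` has full column rank and `q(A,x)_T` is the unique global
minimizer of `w ↦ ‖x − A_{:,T} w‖` over all (not necessarily nonnegative) `w`. -/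
theorem nnls_support_unconstrained {r s : ℕ} (hrs : s ≤ r) (A : Matrix (Fin r) (Fin s) ℝ)
    (hA0 : ∀ i j, 0 ≤ A i j) (hArank : A.rank = s)
    (x : Fin r → ℝ) (hx0 : ∀ i, 0 ≤ x i)
    (qv : Fin s → ℝ) (hq : IsNNLS A x qv)
    (T : Finset (Fin s)) (hT : T = Finset.univ.filter (fun j => 0 < qv j)) :
    (A.submatrix id (Subtype.val : {j // j ∈ T} → Fin s)).rank = T.card ∧
      ∀ w : {j // j ∈ T} → ℝ, w ≠ (fun t => qv t.1) →
        ∑ i, (x i - (A.submatrix id (Subtype.val : {j // j ∈ T} → Fin s)).mulVec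
            (fun t => qv t.1) i) ^ 2 <
          ∑ i, (x i - (A.submatrix id (Subtype.val : {j // j ∈ T} → Fin s)).mulVec w i) ^ 2 :=
  nnls_support_unconstrained_general A hArank x qv hq T hT
end

section
/- The nonnegative least squares map q is continuous on the set of pairs (A, x) where A ∈ ℝ₊^{r×s} (r ≥ s) has full column rank and x ∈ ℝ₊^r; that is, if (Aᵏ, xᵏ) → (A, x) with all Aᵏ and A of full column rank and all entries nonnegative, then q(Aᵏ, xᵏ) → q(A, x). -/
/-!
The NNLS solution `q(A, x)` minimises `w ↦ ‖x - T w‖` over the closed convex cone `ℝ₊^s`, where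
`T` is `A` regarded as a map into Euclidean space. When `T` is injective this minimiser is unique,
by strict convexity of the Euclidean norm. A bound `‖w‖ ≤ K ‖T' w‖` holds uniformly for `T'` near
`T`, and comparing with the limit solution bounds `‖T' q(T', x')‖`, so solutions near `(A, x)`
stay in a compact ball. Being a minimiser is a closed condition on `(T, x, v)`, so every cluster
point of the solutions is a minimiser for `(A, x)`, hence equals `q(A, x)`.
-/

open Matrix

open Filter Topology Function

theorem Filter.Tendsto.mapClusterPt_prodMk {α X Y : Type*} [TopologicalSpace X]
    [TopologicalSpace Y] {l : Filter α} {f : α → X} {g : α → Y} {x : X} {y : Y}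
    (hf : Tendsto f l (𝓝 x)) (hg : MapClusterPt y l g) :
    MapClusterPt (x, y) l fun i => (f i, g i) := by
  rw [mapClusterPt_iff_frequently] at hg ⊢
  intro s hs
  obtain ⟨u, hu, t, ht, hut⟩ := mem_nhds_prod_iff.mp hs
  exact ((hg t ht).and_eventually (hf hu)).mono fun i hi => hut ⟨hi.2, hi.1⟩

theorem Matrix.mulVec_injective_of_rank_eq {K m n : Type*} [Field K] [Fintype m] [Fintype n]
    {A : Matrix m n K} (hA : A.rank = Fintype.card n) : Injective A.mulVec := by
  have hdim := LinearMap.finrank_range_add_finrank_ker A.mulVecLin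
  rw [← Matrix.rank, hA, Module.finrank_fintype_fun_eq_card] at hdim
  have hker : LinearMap.ker A.mulVecLin = ⊥ := Submodule.finrank_eq_zero.mp (by omega)
  exact LinearMap.ker_eq_bot.mp hker

section LeastSquares

variable {E F : Type*} [NormedAddCommGroup E] [NormedSpace ℝ E]
  [NormedAddCommGroup F] [NormedSpace ℝ F]
  {ι : Type*} {l : Filter ι} {T : ι → E →L[ℝ] F} {T₀ : E →L[ℝ] F}

theorem eventually_norm_le_mul_norm_apply [FiniteDimensional ℝ E] (hT : Tendsto T l (𝓝 T₀))
    (hT₀ : Injective T₀) : ∃ K > 0, ∀ᶠ i in l, ∀ w, ‖w‖ ≤ K * ‖T i w‖ := by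
  obtain ⟨K, hK, hT₀K⟩ := T₀.toLinearMap.injective_iff_antilipschitz.mp hT₀
  have hKpos : (0 : ℝ) < K := hK
  have hclose : ∀ᶠ i in l, ‖T i - T₀‖ ≤ (2 * (K : ℝ))⁻¹ :=
    (tendsto_iff_norm_sub_tendsto_zero.mp hT).eventually (eventually_le_nhds (by positivity))
  refine ⟨2 * (K : ℝ), by positivity, hclose.mono fun i hi w => ?_⟩
  have hT₀w : ‖w‖ ≤ K * ‖T₀ w‖ := T₀.bound_of_antilipschitz hT₀K w
  have hperturb : ‖T₀ w‖ ≤ ‖T i w‖ + (2 * (K : ℝ))⁻¹ * ‖w‖ :=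
    calc ‖T₀ w‖ ≤ ‖T i w‖ + ‖(T i - T₀) w‖ := by
          simpa using norm_sub_le (T i w) ((T i - T₀) w)
      _ ≤ ‖T i w‖ + (2 * (K : ℝ))⁻¹ * ‖w‖ := by
          gcongr; exact (T i - T₀).le_of_opNorm_le hi w
  have hhalf : (K : ℝ) * ((2 * (K : ℝ))⁻¹ * ‖w‖) = ‖w‖ / 2 := by field_simp
  have := mul_le_mul_of_nonneg_left hperturb hKpos.le
  linarith

def IsLeastSquaresOn (C : Set E) (T : E →L[ℝ] F) (x : F) (v : E) : Prop :=
  v ∈ C ∧ ∀ w ∈ C, ‖x - T v‖ ≤ ‖x - T w‖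

variable {C : Set E} {x : ι → F} {x₀ : F} {v : ι → E} {v₀ : E}

theorem IsLeastSquaresOn.unique [StrictConvexSpace ℝ F] (hC : Convex ℝ C) {T : E →L[ℝ] F}
    (hT : Injective T) {x : F} {v w : E} (hv : IsLeastSquaresOn C T x v)
    (hw : IsLeastSquaresOn C T x w) : v = w := by
  by_contra hne
  have heq : ‖x - T v‖ = ‖x - T w‖ := le_antisymm (hv.2 w hw.1) (hw.2 v hv.1)
  have hlt : ‖(1 / 2 : ℝ) • ((x - T v) + (x - T w))‖ < ‖x - T v‖ :=
    (norm_midpoint_lt_iff heq).mpr fun h => hne (hT (sub_right_injective h))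
  have hmid : (1 / 2 : ℝ) • v + (1 / 2 : ℝ) • w ∈ C :=
    hC hv.1 hw.1 (by norm_num) (by norm_num) (by norm_num)
  have hres :
      x - T ((1 / 2 : ℝ) • v + (1 / 2 : ℝ) • w) = (1 / 2 : ℝ) • ((x - T v) + (x - T w)) := by
    simp only [map_add, map_smul]
    module
  have hle := hv.2 _ hmid
  rw [hres] at hle
  exact hle.not_gt hlt

theorem isClosed_setOf_isLeastSquaresOn (hC : IsClosed C) :
    IsClosed {p : ((E →L[ℝ] F) × F) × E | IsLeastSquaresOn C p.1.1 p.1.2 p.2} := by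
  simp only [IsLeastSquaresOn, Set.ofPred_and, Set.ofPred_forall]
  exact (hC.preimage continuous_snd).inter <|
    isClosed_iInter fun w => isClosed_iInter fun _ => isClosed_le (by fun_prop) (by fun_prop)

theorem IsLeastSquaresOn.of_mapClusterPt (hC : IsClosed C) (hT : Tendsto T l (𝓝 T₀))
    (hx : Tendsto x l (𝓝 x₀)) (hv : ∀ᶠ i in l, IsLeastSquaresOn C (T i) (x i) (v i)) {b : E}
    (hb : MapClusterPt b l v) : IsLeastSquaresOn C T₀ x₀ b :=
  (isClosed_setOf_isLeastSquaresOn hC).mem_of_mapClusterPt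
    ((hT.prodMk_nhds hx).mapClusterPt_prodMk hb) hv

theorem IsLeastSquaresOn.eventually_norm_le [FiniteDimensional ℝ E] (hT : Tendsto T l (𝓝 T₀))
    (hx : Tendsto x l (𝓝 x₀)) (hT₀ : Injective T₀)
    (hv : ∀ᶠ i in l, IsLeastSquaresOn C (T i) (x i) (v i)) (hv₀ : IsLeastSquaresOn C T₀ x₀ v₀) :
    ∃ B, ∀ᶠ i in l, ‖v i‖ ≤ B := by
  obtain ⟨K, hK, hKT⟩ := eventually_norm_le_mul_norm_apply hT hT₀
  have hTv₀ : Tendsto (fun i => T i v₀) l (𝓝 (T₀ v₀)) :=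
    ((continuous_eval_const v₀).tendsto T₀).comp hT
  set M := ‖x₀‖ + ‖x₀ - T₀ v₀‖
  have hM : ∀ᶠ i in l, ‖x i‖ + ‖x i - T i v₀‖ ≤ M + 1 :=
    (hx.norm.add (hx.sub hTv₀).norm).eventually (eventually_le_nhds (lt_add_one M))
  refine ⟨K * (M + 1), ?_⟩
  filter_upwards [hKT, hv, hM] with i hKTi hvi hMi
  calc ‖v i‖ ≤ K * ‖T i (v i)‖ := hKTi (v i)
    _ ≤ K * (‖x i‖ + ‖x i - T i v₀‖) := by
        gcongr
        calc ‖T i (v i)‖ ≤ ‖x i‖ + ‖x i - T i (v i)‖ := norm_le_norm_add_norm_sub _ _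
          _ ≤ ‖x i‖ + ‖x i - T i v₀‖ := by gcongr; exact hvi.2 v₀ hv₀.1
    _ ≤ K * (M + 1) := by gcongr

theorem IsLeastSquaresOn.tendsto [FiniteDimensional ℝ E] [StrictConvexSpace ℝ F]
    (hC : IsClosed C) (hCc : Convex ℝ C) (hT : Tendsto T l (𝓝 T₀)) (hx : Tendsto x l (𝓝 x₀))
    (hT₀ : Injective T₀) (hv : ∀ᶠ i in l, IsLeastSquaresOn C (T i) (x i) (v i))
    (hv₀ : IsLeastSquaresOn C T₀ x₀ v₀) : Tendsto v l (𝓝 v₀) := by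
  obtain ⟨B, hB⟩ := IsLeastSquaresOn.eventually_norm_le hT hx hT₀ hv hv₀
  refine (isCompact_closedBall (0 : E) B).tendsto_nhds_of_unique_mapClusterPt
    (hB.mono fun i hi => mem_closedBall_zero_iff.mpr hi) fun b _ hb => ?_
  exact (IsLeastSquaresOn.of_mapClusterPt hC hT hx hv hb).unique hCc hT₀ hv₀

end LeastSquares

namespace Matrix

variable {m n : Type*} [Fintype m] [Fintype n]

/-- `w ↦ A *ᵥ w` with the Euclidean norm on the codomain, so that `‖x - A *ᵥ w‖` is the square
root of the least squares objective. -/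
noncomputable def mulVecEuclideanCLM (A : Matrix m n ℝ) : (n → ℝ) →L[ℝ] EuclideanSpace ℝ m :=
  LinearMap.toContinuousLinearMap
    ((WithLp.linearEquiv 2 ℝ (m → ℝ)).symm.toLinearMap ∘ₗ A.mulVecLin)

@[simp]
theorem mulVecEuclideanCLM_apply (A : Matrix m n ℝ) (w : n → ℝ) :
    A.mulVecEuclideanCLM w = WithLp.toLp 2 (A *ᵥ w) :=
  rfl

theorem continuous_mulVecEuclideanCLM :
    Continuous fun A : Matrix m n ℝ => A.mulVecEuclideanCLM :=
  continuous_clm_apply.mpr fun _ =>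
    (PiLp.continuous_toLp 2 _).comp (continuous_id.matrix_mulVec continuous_const)

theorem mulVecEuclideanCLM_injective {A : Matrix m n ℝ} (hA : A.rank = Fintype.card n) :
    Injective A.mulVecEuclideanCLM :=
  (WithLp.toLp_injective 2).comp (mulVec_injective_of_rank_eq hA)

end Matrix

theorem IsNNLS.isLeastSquaresOn {r s : ℕ} {A : Matrix (Fin r) (Fin s) ℝ} {x : Fin r → ℝ}
    {v : Fin s → ℝ} (hv : IsNNLS A x v) :
    IsLeastSquaresOn (Set.Ici 0) A.mulVecEuclideanCLM (WithLp.toLp 2 x) v := by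
  refine ⟨hv.1, fun w hw => ?_⟩
  simp only [EuclideanSpace.norm_eq, Matrix.mulVecEuclideanCLM_apply, ← WithLp.toLp_sub,
    Real.norm_eq_abs, sq_abs]
  exact Real.sqrt_le_sqrt (hv.2 w hw)

theorem nnls_continuousOn_general {r s : ℕ}
    (Q : (Fin r → Fin s → ℝ) → (Fin r → ℝ) → (Fin s → ℝ))
    (hQ : ∀ A x, (∀ i j, 0 ≤ A i j) → (∀ i, 0 ≤ x i) → (Matrix.of A).rank = s →
      IsNNLS (Matrix.of A) x (Q A x)) :
    ContinuousOn (fun p : (Fin r → Fin s → ℝ) × (Fin r → ℝ) => Q p.1 p.2)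
      {p | (∀ i j, 0 ≤ p.1 i j) ∧ (∀ i, 0 ≤ p.2 i) ∧ (Matrix.of p.1).rank = s} := by
  intro p hp
  have hT : Continuous fun q : (Fin r → Fin s → ℝ) × (Fin r → ℝ) =>
      (Matrix.of q.1).mulVecEuclideanCLM :=
    Matrix.continuous_mulVecEuclideanCLM.comp continuous_fst
  have hx : Continuous fun q : (Fin r → Fin s → ℝ) × (Fin r → ℝ) => WithLp.toLp 2 q.2 :=
    (PiLp.continuous_toLp 2 _).comp continuous_snd
  exact IsLeastSquaresOn.tendsto isClosed_Ici (convex_Ici 0)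
    hT.continuousWithinAt hx.continuousWithinAt
    (Matrix.mulVecEuclideanCLM_injective (hp.2.2.trans (Fintype.card_fin s).symm))
    (eventually_nhdsWithin_of_forall fun q hq => (hQ _ _ hq.1 hq.2.1 hq.2.2).isLeastSquaresOn)
    (hQ _ _ hp.1 hp.2.1 hp.2.2).isLeastSquaresOn

/-- the nonnegative least squares map `q` is continuous on the set of
pairs `(A, x)` with `A` nonnegative of full column rank and `x` nonnegative. -/
theorem nnls_continuousOn {r s : ℕ} (hrs : s ≤ r)
    (Q : (Fin r → Fin s → ℝ) → (Fin r → ℝ) → (Fin s → ℝ))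
    (hQ : ∀ A x, (∀ i j, 0 ≤ A i j) → (∀ i, 0 ≤ x i) → (Matrix.of A).rank = s →
      IsNNLS (Matrix.of A) x (Q A x)) :
    ContinuousOn (fun p : (Fin r → Fin s → ℝ) × (Fin r → ℝ) => Q p.1 p.2)
      {p | (∀ i j, 0 ≤ p.1 i j) ∧ (∀ i, 0 ≤ p.2 i) ∧ (Matrix.of p.1).rank = s} :=
  nnls_continuousOn_general Q hQ
end

section
/- The complement of U_{r,s} in ℝ₊^{r×s} × ℝ₊^r has Lebesgue measure zero; consequently U_{r,s} is dense and of full measure. -/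
/-!
For `A` of full column rank the NNLS solution `v` is unique and is characterised by the KKT
conditions for `λ = Aᵀ (x - A v)`: `v ≥ 0`, `λ ≤ 0`, and `λⱼ = 0` wherever `vⱼ > 0`. On its
support `S`, `v` solves the normal equations restricted to `S`, whose solution depends
continuously on `(A, x)`. Under strict complementarity (`λⱼ < 0` off `S`) the restricted solution
therefore stays a KKT point with support `S` for all nearby data, so the support is locally
constant. What remains is the rank-deficient data, a null set by Fubini over the columns of `A`,
and the data where `λⱼ = 0` for some `j ∉ S`; for fixed `A` this is a nontrivial linear equation
in `x` (it fails at `x = A eⱼ`), so it is null by Fubini as well. Density follows because the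
orthant is the closure of its interior.
-/

open Matrix MeasureTheory

open Filter Topology Set Function

theorem nonpos_of_forall_mul_le_mul_sq {b d c : ℝ} (hc : 0 < c)
    (h : ∀ t ∈ Ioc 0 c, b * t ≤ d * t ^ 2) : b ≤ 0 := by
  have hlim : Tendsto (fun t => d * t) (𝓝[>] 0) (𝓝 0) :=
    ((continuous_const_mul d).tendsto' 0 0 (mul_zero d)).mono_left nhdsWithin_le_nhds
  refine ge_of_tendsto hlim (eventually_of_mem (Ioc_mem_nhdsGT hc) fun t ht => ?_)
  have := h t ht
  nlinarith [ht.1]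

theorem Matrix.rank_eq_iff_linearIndependent_col {m : Type*} [Fintype m] {s : ℕ}
    (A : Matrix m (Fin s) ℝ) : A.rank = s ↔ LinearIndependent ℝ A.col := by
  rw [rank_eq_finrank_span_cols, linearIndependent_iff_card_eq_finrank_span, Fintype.card_fin,
    eq_comm]
  rfl

theorem subset_closure_of_measure_diff_eq_zero {X : Type*} [TopologicalSpace X]
    [MeasurableSpace X] {μ : Measure X} [μ.IsOpenPosMeasure] {P U : Set X} (hPU : μ (P \ U) = 0)
    (hP : P ⊆ closure (interior P)) : P ⊆ closure U := by
  have hint : interior P \ closure U = ∅ :=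
    (isOpen_interior.sdiff isClosed_closure).eq_empty_of_measure_zero
      (measure_mono_null (sdiff_subset_sdiff interior_subset subset_closure) hPU)
  exact hP.trans (closure_minimal (sdiff_eq_empty.mp hint) isClosed_closure)

section LeastSquares

variable {m n : Type*} [Fintype m] [Fintype n]

-- minus half the gradient of `v ↦ ‖x - A v‖²`
def dualVec (A : Matrix m n ℝ) (x : m → ℝ) (v : n → ℝ) : n → ℝ := Aᵀ *ᵥ (x - A *ᵥ v)

theorem dualVec_eq (A : Matrix m n ℝ) (x : m → ℝ) (v : n → ℝ) :
    dualVec A x v = Aᵀ *ᵥ x - (Aᵀ * A) *ᵥ v := by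
  rw [dualVec, mulVec_sub, mulVec_mulVec]

theorem sum_sq_sub_mulVec (A : Matrix m n ℝ) (x : m → ℝ) (u w : n → ℝ) :
    ∑ i, (x i - (A *ᵥ u) i) ^ 2 = ∑ i, (x i - (A *ᵥ w) i) ^ 2
      + 2 * (dualVec A x w ⬝ᵥ (w - u)) + ∑ i, (A *ᵥ (w - u)) i ^ 2 := by
  have hcross : dualVec A x w ⬝ᵥ (w - u) = ∑ i, (x i - (A *ᵥ w) i) * (A *ᵥ (w - u)) i := by
    rw [dualVec, mulVec_transpose, ← dotProduct_mulVec]; rfl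
  rw [hcross, Finset.mul_sum, ← Finset.sum_add_distrib, ← Finset.sum_add_distrib]
  refine Finset.sum_congr rfl fun i _ => ?_
  rw [mulVec_sub, Pi.sub_apply]
  ring

theorem sum_sq_sub_mulVec_add_single [DecidableEq n] (A : Matrix m n ℝ) (x : m → ℝ)
    (v : n → ℝ) (j : n) (t : ℝ) :
    ∑ i, (x i - (A *ᵥ (v + Pi.single j t)) i) ^ 2 = ∑ i, (x i - (A *ᵥ v) i) ^ 2
      - 2 * dualVec A x v j * t + (∑ i, A i j ^ 2) * t ^ 2 := by
  rw [sum_sq_sub_mulVec A x _ v, sub_add_cancel_left, dotProduct_neg, dotProduct_single,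
    mulVec_neg, mulVec_single, Finset.sum_mul]
  simp only [Pi.neg_apply, Pi.smul_apply, col_apply, op_smul_eq_mul]
  ring_nf

def IsKKT (A : Matrix m n ℝ) (x : m → ℝ) (w : n → ℝ) : Prop :=
  (∀ j, 0 ≤ w j) ∧ (∀ j, dualVec A x w j ≤ 0) ∧ ∀ j, 0 < w j → dualVec A x w j = 0

theorem IsKKT.sum_sq_add_le {A : Matrix m n ℝ} {x : m → ℝ} {w : n → ℝ} (hw : IsKKT A x w)
    {u : n → ℝ} (hu : ∀ j, 0 ≤ u j) :
    ∑ i, (x i - (A *ᵥ w) i) ^ 2 + ∑ i, (A *ᵥ (w - u)) i ^ 2 ≤ ∑ i, (x i - (A *ᵥ u) i) ^ 2 := by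
  have hcross : 0 ≤ dualVec A x w ⬝ᵥ (w - u) := Finset.sum_nonneg fun j _ => by
    rcases (hw.1 j).eq_or_lt with hwj | hwj
    · rw [Pi.sub_apply, ← hwj, zero_sub, mul_neg]
      exact neg_nonneg.mpr (mul_nonpos_of_nonpos_of_nonneg (hw.2.1 j) (hu j))
    · rw [hw.2.2 j hwj, zero_mul]
  rw [sum_sq_sub_mulVec A x u w]
  linarith

end LeastSquares

section KKT

variable {r s : ℕ} {A : Matrix (Fin r) (Fin s) ℝ} {x : Fin r → ℝ} {v : Fin s → ℝ}

theorem IsNNLS.isKKT (hv : IsNNLS A x v) : IsKKT A x v := by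
  -- first-order conditions along the feasible directions `± eⱼ`
  have hmin : ∀ j t, -v j ≤ t → 2 * dualVec A x v j * t ≤ (∑ i, A i j ^ 2) * t ^ 2 := by
    intro j t ht
    have hfeas : ∀ k, 0 ≤ (v + Pi.single j t : Fin s → ℝ) k := fun k => by
      rcases eq_or_ne k j with rfl | hk
      · simpa [neg_le_iff_add_nonneg'] using ht
      · simpa [hk] using hv.1 k
    have := hv.2 _ hfeas
    rw [sum_sq_sub_mulVec_add_single] at this
    linarith
  have hnonpos : ∀ j, dualVec A x v j ≤ 0 := fun j => by
    have := nonpos_of_forall_mul_le_mul_sq one_pos fun t ht => hmin j t (by linarith [hv.1 j, ht.1])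
    linarith
  refine ⟨hv.1, hnonpos, fun j hj => le_antisymm (hnonpos j) ?_⟩
  have := nonpos_of_forall_mul_le_mul_sq (b := -2 * dualVec A x v j) (d := ∑ i, A i j ^ 2) hj
    fun t ht => by linarith [hmin j (-t) (neg_le_neg ht.2), neg_sq t]
  linarith

theorem IsNNLS.eq_of_isKKT (hA : Injective A.mulVec) (hv : IsNNLS A x v) {w : Fin s → ℝ}
    (hw : IsKKT A x w) : v = w := by
  have hsq : ∑ i, (A *ᵥ (w - v)) i ^ 2 ≤ 0 := by
    linarith [hw.sum_sq_add_le hv.1, hv.2 w hw.1]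
  have hzero : A *ᵥ (w - v) = 0 := by
    rw [← dotProduct_self_eq_zero]
    simpa [dotProduct, sq] using le_antisymm hsq (Finset.sum_nonneg fun _ _ => sq_nonneg _)
  rw [mulVec_sub, sub_eq_zero] at hzero
  exact (hA hzero).symm

end KKT

section RestrictedSystem

variable {m n : Type*} [Fintype m] [Fintype n] [DecidableEq n]

def coordProj (S : Finset n) : Matrix n n ℝ := diagonal fun j => if j ∈ S then 1 else 0

theorem coordProj_mulVec_apply (S : Finset n) (v : n → ℝ) (j : n) :
    (coordProj S *ᵥ v) j = if j ∈ S then v j else 0 := by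
  simp [coordProj, mulVec_diagonal]

theorem coordProj_mulVec_eq_self {S : Finset n} {v : n → ℝ} (hv : ∀ j ∉ S, v j = 0) :
    coordProj S *ᵥ v = v :=
  funext fun j => by rw [coordProj_mulVec_apply]; split_ifs with hj <;> simp [hv, hj]

/-- The Gram matrix of the columns in `S`, padded with the identity off `S`; invertible whenever
`A` is injective. -/
def restrictedGram (A : Matrix m n ℝ) (S : Finset n) : Matrix n n ℝ :=
  coordProj S * (Aᵀ * A) * coordProj S + (1 - coordProj S)

noncomputable def restrictedSol (A : Matrix m n ℝ) (S : Finset n) (x : m → ℝ) : n → ℝ :=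
  (restrictedGram A S)⁻¹ *ᵥ (coordProj S *ᵥ (Aᵀ *ᵥ x))

theorem restrictedGram_mulVec_apply (A : Matrix m n ℝ) (S : Finset n) (v : n → ℝ) (j : n) :
    (restrictedGram A S *ᵥ v) j = if j ∈ S then ((Aᵀ * A) *ᵥ (coordProj S *ᵥ v)) j else v j := by
  rw [restrictedGram, add_mulVec, sub_mulVec, one_mulVec, ← mulVec_mulVec, ← mulVec_mulVec]
  simp only [Pi.add_apply, Pi.sub_apply, coordProj_mulVec_apply]
  split_ifs <;> ring

theorem restrictedGram_mulVec_eq_iff (A : Matrix m n ℝ) (S : Finset n) (x : m → ℝ)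
    (v : n → ℝ) :
    restrictedGram A S *ᵥ v = coordProj S *ᵥ (Aᵀ *ᵥ x) ↔
      (∀ j ∉ S, v j = 0) ∧ ∀ j ∈ S, dualVec A x v j = 0 := by
  simp only [funext_iff, restrictedGram_mulVec_apply, coordProj_mulVec_apply, dualVec_eq,
    Pi.sub_apply, sub_eq_zero]
  constructor
  · intro h
    have hoff : ∀ j ∉ S, v j = 0 := fun j hj => by simpa [hj] using h j
    refine ⟨hoff, fun j hj => ?_⟩
    simpa [hj, coordProj_mulVec_eq_self hoff] using (h j).symm
  · rintro ⟨hoff, hS⟩ j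
    split_ifs with hj
    · rw [coordProj_mulVec_eq_self hoff, hS j hj]
    · exact hoff j hj

theorem restrictedSol_eq_mulVec (A : Matrix m n ℝ) (S : Finset n) (x : m → ℝ) :
    restrictedSol A S x = ((restrictedGram A S)⁻¹ * coordProj S * Aᵀ) *ᵥ x := by
  rw [restrictedSol, mulVec_mulVec, mulVec_mulVec, Matrix.mul_assoc]

theorem dualVec_restrictedSol_eq_mulVec (A : Matrix m n ℝ) (S : Finset n) (x : m → ℝ) :
    dualVec A x (restrictedSol A S x)
      = (Aᵀ - Aᵀ * A * ((restrictedGram A S)⁻¹ * coordProj S * Aᵀ)) *ᵥ x := by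
  simp only [dualVec, restrictedSol_eq_mulVec, mulVec_sub, sub_mulVec, mulVec_mulVec,
    Matrix.mul_assoc]

theorem dotProduct_eq_zero_of_complementary {S : Finset n} {v w : n → ℝ}
    (hv : ∀ j ∉ S, v j = 0) (hw : ∀ j ∈ S, w j = 0) : v ⬝ᵥ w = 0 :=
  Finset.sum_eq_zero fun j _ => by
    by_cases hj : j ∈ S
    · rw [hw j hj, mul_zero]
    · rw [hv j hj, zero_mul]

variable {A : Matrix m n ℝ} (hA : Injective A.mulVec) (S : Finset n)
include hA

theorem isUnit_restrictedGram : IsUnit (restrictedGram A S) := by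
  refine mulVec_injective_iff_isUnit.mp <| (injective_iff_map_eq_zero (mulVecLin _)).mpr
    fun v hv => ?_
  obtain ⟨hoff, hS⟩ := (restrictedGram_mulVec_eq_iff A S 0 v).mp (by simpa using hv)
  have hAv : (A *ᵥ v) ⬝ᵥ (A *ᵥ v) = 0 := by
    have := dotProduct_eq_zero_of_complementary hoff hS
    rwa [dualVec, zero_sub, mulVec_neg, dotProduct_neg, dotProduct_mulVec, vecMul_transpose,
      neg_eq_zero] at this
  exact hA (by rw [dotProduct_self_eq_zero.mp hAv, mulVec_zero])

theorem restrictedSol_eq_iff (x : m → ℝ) (v : n → ℝ) :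
    restrictedSol A S x = v ↔ (∀ j ∉ S, v j = 0) ∧ ∀ j ∈ S, dualVec A x v j = 0 := by
  have hdet := (isUnit_iff_isUnit_det _).mp (isUnit_restrictedGram hA S)
  rw [← restrictedGram_mulVec_eq_iff, restrictedSol]
  constructor
  · rintro rfl
    rw [mulVec_mulVec, mul_nonsing_inv _ hdet, one_mulVec]
  · rintro h
    rw [← h, mulVec_mulVec, nonsing_inv_mul _ hdet, one_mulVec]

theorem dualVec_restrictedSol_mulVec_single_pos {j : n} (hj : j ∉ S) :
    0 < dualVec A (A *ᵥ Pi.single j 1) (restrictedSol A S (A *ᵥ Pi.single j 1)) j := by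
  -- `λⱼ = ‖A (eⱼ - u)‖²` for the restricted solution `u`
  set u := restrictedSol A S (A *ᵥ Pi.single j 1)
  obtain ⟨hoff, hS⟩ := (restrictedSol_eq_iff hA S _ u).mp rfl
  have hdot : (Pi.single j 1 - u) ⬝ᵥ dualVec A (A *ᵥ Pi.single j 1) u
      = (A *ᵥ (Pi.single j 1 - u)) ⬝ᵥ (A *ᵥ (Pi.single j 1 - u)) := by
    rw [dualVec, ← mulVec_sub, dotProduct_mulVec, vecMul_transpose]
  rw [sub_dotProduct, single_dotProduct, one_mul, dotProduct_eq_zero_of_complementary hoff hS,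
    sub_zero] at hdot
  have hne : A *ᵥ (Pi.single j 1 - u) ≠ 0 := fun h => by
    have := congr_fun (hA (h.trans (mulVec_zero A).symm)) j
    simp [hoff j hj] at this
  rw [hdot]
  exact (Finset.sum_nonneg fun i _ => mul_self_nonneg _).lt_of_ne
    (Ne.symm (dotProduct_self_eq_zero.not.mpr hne))

theorem continuousAt_restrictedSol (x : m → ℝ) :
    ContinuousAt (fun p : Matrix m n ℝ × (m → ℝ) => restrictedSol p.1 S p.2) (A, x) := by
  have hgram : Continuous fun p : Matrix m n ℝ × (m → ℝ) => restrictedGram p.1 S := by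
    have h : Continuous fun p : Matrix m n ℝ × (m → ℝ) => p.1ᵀ * p.1 :=
      continuous_fst.matrix_transpose.matrix_mul continuous_fst
    exact ((continuous_const.matrix_mul h).matrix_mul continuous_const).add continuous_const
  have hdet := (isUnit_iff_isUnit_det _).mp (isUnit_restrictedGram hA S)
  have hinv : ContinuousAt Inv.inv (restrictedGram A S) :=
    continuousAt_matrix_inv _ (by rw [Ring.inverse_eq_inv']; exact continuousAt_inv₀ hdet.ne_zero)
  have hrhs : Continuous fun p : Matrix m n ℝ × (m → ℝ) => coordProj S *ᵥ (p.1ᵀ *ᵥ p.2) :=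
    continuous_const.matrix_mulVec (continuous_fst.matrix_transpose.matrix_mulVec continuous_snd)
  have hmul : Continuous fun q : Matrix n n ℝ × (n → ℝ) => q.1 *ᵥ q.2 :=
    continuous_fst.matrix_mulVec continuous_snd
  exact hmul.continuousAt.comp
    ((hinv.comp (x := (A, x)) hgram.continuousAt).prodMk hrhs.continuousAt)

theorem continuousAt_dualVec_restrictedSol (x : m → ℝ) :
    ContinuousAt (fun p : Matrix m n ℝ × (m → ℝ) => dualVec p.1 p.2 (restrictedSol p.1 S p.2))
      (A, x) := by
  have hdual : Continuous fun q : (Matrix m n ℝ × (m → ℝ)) × (n → ℝ) => dualVec q.1.1 q.1.2 q.2 :=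
    (continuous_fst.fst.matrix_transpose).matrix_mulVec
      (continuous_fst.snd.sub (continuous_fst.fst.matrix_mulVec continuous_snd))
  exact hdual.continuousAt.comp (continuousAt_id.prodMk (continuousAt_restrictedSol hA S x))

end RestrictedSystem

section NullSets

variable {E : Type*} [NormedAddCommGroup E] [NormedSpace ℝ E] [FiniteDimensional ℝ E]
  [MeasurableSpace E] [BorelSpace E] (μ : Measure E) [μ.IsAddHaarMeasure]

theorem addHaar_span_range_eq_zero {k : ℕ} (hk : k < Module.finrank ℝ E) (c : Fin k → E) :
    μ (Submodule.span ℝ (range c)) = 0 := by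
  refine Measure.addHaar_submodule μ _ fun htop => ?_
  have := finrank_range_le_card (R := ℝ) c
  rw [Set.finrank, htop, finrank_top, Fintype.card_fin] at this
  omega

theorem addHaar_pi_setOf_not_linearIndependent :
    ∀ {k : ℕ}, k ≤ Module.finrank ℝ E →
      Measure.pi (fun _ : Fin k => μ) {c | ¬LinearIndependent ℝ c} = 0
  | 0, _ => by simp
  | k + 1, hk => by
    have hclosed : IsClosed {c : Fin (k + 1) → E | ¬LinearIndependent ℝ c} :=
      isOpen_setOfPred_linearIndependent.isClosed_compl
    -- Fubini over the first vector: for independent remaining vectors `c`, the bad first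
    -- vectors form the proper subspace `span (range c)`.
    set e := MeasurableEquiv.piFinSuccAbove (fun _ : Fin (k + 1) => E) 0
    rw [← (measurePreserving_piFinSuccAbove (fun _ => μ) 0).symm.measure_preimage
      hclosed.measurableSet.nullMeasurableSet,
      Measure.prod_apply_symm (e.symm.measurable hclosed.measurableSet)]
    have hli : ∀ᵐ c ∂Measure.pi (fun _ : Fin k => μ), LinearIndependent ℝ c :=
      ae_iff.mpr (addHaar_pi_setOf_not_linearIndependent (by omega))
    refine (lintegral_congr_ae (hli.mono fun c hc => ?_)).trans lintegral_zero
    refine measure_mono_null (fun a ha => ?_) (addHaar_span_range_eq_zero μ (by omega) c)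
    replace ha : ¬LinearIndependent ℝ (Fin.insertNth 0 a c) := ha
    rw [Fin.insertNth_zero', linearIndependent_finCons] at ha
    by_contra h
    exact ha ⟨hc, h⟩

variable {r s : ℕ}

theorem volume_setOf_not_linearIndependent_col (hsr : s ≤ r) :
    volume {p : (Fin r → Fin s → ℝ) × (Fin r → ℝ) | ¬LinearIndependent ℝ (of p.1).col} = 0 := by
  let T : (Fin r → Fin s → ℝ) ≃L[ℝ] (Fin s → Fin r → ℝ) :=
    (transposeLinearEquiv (Fin r) (Fin s) ℝ ℝ).toContinuousLinearEquiv
  have hN : volume {c : Fin s → Fin r → ℝ | ¬LinearIndependent ℝ c} = 0 :=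
    addHaar_pi_setOf_not_linearIndependent volume (by simpa using hsr)
  have hmeas : MeasurableSet {c : Fin s → Fin r → ℝ | ¬LinearIndependent ℝ c} :=
    isOpen_setOfPred_linearIndependent.isClosed_compl.measurableSet
  have hcols : volume (T ⁻¹' {c | ¬LinearIndependent ℝ c}) = 0 := by
    have := T.isAddHaarMeasure_map (volume : Measure (Fin r → Fin s → ℝ))
    have : (volume : Measure (Fin s → Fin r → ℝ)).IsAddHaarMeasure := Measure.pi.isAddHaarMeasure _
    rw [← Measure.map_apply T.continuous.measurable hmeas]
    exact Measure.absolutelyContinuous_isAddHaarMeasure _ _ hN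
  have hprod : {p : (Fin r → Fin s → ℝ) × (Fin r → ℝ) | ¬LinearIndependent ℝ (of p.1).col}
      = (T ⁻¹' {c | ¬LinearIndependent ℝ c}) ×ˢ univ := by
    rw [prod_univ]; rfl
  rw [hprod, Measure.volume_eq_prod, Measure.prod_prod, hcols, zero_mul]

theorem isOpen_setOf_linearIndependent_col :
    IsOpen {p : (Fin r → Fin s → ℝ) × (Fin r → ℝ) | LinearIndependent ℝ (of p.1).col} :=
  isOpen_setOfPred_linearIndependent.preimage
    (continuous_fst (X := Matrix (Fin r) (Fin s) ℝ) (Y := Fin r → ℝ)).matrix_transpose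

theorem volume_setOf_dualVec_restrictedSol_eq_zero {S : Finset (Fin s)} {j : Fin s} (hj : j ∉ S) :
    volume {p : (Fin r → Fin s → ℝ) × (Fin r → ℝ) | LinearIndependent ℝ (of p.1).col ∧
      dualVec (of p.1) p.2 (restrictedSol (of p.1) S p.2) j = 0} = 0 := by
  set W := {p : (Fin r → Fin s → ℝ) × (Fin r → ℝ) | LinearIndependent ℝ (of p.1).col}
  set g := fun p : (Fin r → Fin s → ℝ) × (Fin r → ℝ) =>
    dualVec (of p.1) p.2 (restrictedSol (of p.1) S p.2) j
  have hg : ContinuousOn g W := fun p hp =>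
    ((continuous_apply j).continuousAt.comp
      (continuousAt_dualVec_restrictedSol (mulVec_injective_iff.mpr hp) S p.2)).continuousWithinAt
  have hmeas : MeasurableSet (W ∩ g ⁻¹' {0}) := by
    have : W ∩ g ⁻¹' {0} = W \ (W ∩ g ⁻¹' {0}ᶜ) := by
      ext p; simp only [mem_inter_iff, Set.mem_sdiff, mem_preimage, mem_compl_iff]; tauto
    rw [this]
    exact isOpen_setOf_linearIndependent_col.measurableSet.diff (hg.isOpen_inter_preimage
      isOpen_setOf_linearIndependent_col isOpen_compl_singleton).measurableSet
  change volume (W ∩ g ⁻¹' {0}) = 0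
  rw [Measure.volume_eq_prod, Measure.measure_prod_null hmeas]
  refine Eventually.of_forall fun A => ?_
  by_cases hA : LinearIndependent ℝ (of A).col
  · let ℓ := (LinearMap.proj j).comp
      ((of A)ᵀ - (of A)ᵀ * of A * ((restrictedGram (of A) S)⁻¹ * coordProj S * (of A)ᵀ)).mulVecLin
    have hℓ : ∀ x, ℓ x = g (A, x) := fun x => by
      simp only [g, dualVec_restrictedSol_eq_mulVec]; rfl
    have hker : LinearMap.ker ℓ ≠ ⊤ := fun h => by
      refine (dualVec_restrictedSol_mulVec_single_pos (mulVec_injective_iff.mpr hA) S hj).ne' ?_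
      rw [← LinearMap.mem_ker.mp (h ▸ Submodule.mem_top)]
      exact (hℓ _).symm
    exact measure_mono_null (fun x hx => LinearMap.mem_ker.mpr ((hℓ x).trans hx.2))
      (Measure.addHaar_submodule volume _ hker)
  · exact measure_mono_null (fun x hx => (hA hx.1).elim) measure_empty

/-- The data at which strict complementarity fails for the solution of the normal equations
restricted to some support `S`. -/
def degenerateSet (r s : ℕ) : Set ((Fin r → Fin s → ℝ) × (Fin r → ℝ)) :=
  ⋃ (S : Finset (Fin s)) (j : Fin s) (_ : j ∉ S), {p | LinearIndependent ℝ (of p.1).col ∧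
    dualVec (of p.1) p.2 (restrictedSol (of p.1) S p.2) j = 0}

theorem volume_degenerateSet : volume (degenerateSet r s) = 0 :=
  measure_iUnion_null fun _ => measure_iUnion_null fun _ => measure_iUnion_null
    volume_setOf_dualVec_restrictedSol_eq_zero

end NullSets

section Support

variable {r s : ℕ} {A : Fin r → Fin s → ℝ} {x : Fin r → ℝ} {v : Fin s → ℝ}

theorem IsNNLS.restrictedSol_eq (hA : Injective (of A).mulVec) (hv : IsNNLS (of A) x v) :
    restrictedSol (of A) (Finset.univ.filter (0 < v ·)) x = v :=
  (restrictedSol_eq_iff hA _ x v).mpr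
    ⟨fun j hj => le_antisymm (not_lt.mp (by simpa using hj)) (hv.1 j),
      fun j hj => hv.isKKT.2.2 j (by simpa using hj)⟩

theorem IsNNLS.eventually_support_eq (hA : LinearIndependent ℝ (of A).col)
    (hv : IsNNLS (of A) x v) (hstrict : ∀ j, v j = 0 → dualVec (of A) x v j ≠ 0) :
    ∀ᶠ p : (Fin r → Fin s → ℝ) × (Fin r → ℝ) in 𝓝 (A, x), LinearIndependent ℝ (of p.1).col ∧
      ∀ w, IsNNLS (of p.1) p.2 w → {j | 0 < w j} = {j | 0 < v j} := by
  have hA' := mulVec_injective_iff.mpr hA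
  have hkkt := hv.isKKT
  set S := Finset.univ.filter (0 < v ·)
  have hmem : ∀ j, j ∈ S ↔ 0 < v j := by simp [S]
  have hsol : restrictedSol (of A) S x = v := hv.restrictedSol_eq hA'
  have hoff := ((restrictedSol_eq_iff hA' S x v).mp hsol).1
  have hsigns : ∀ j, ∀ᶠ p : (Fin r → Fin s → ℝ) × (Fin r → ℝ) in 𝓝 (A, x),
      (j ∈ S → 0 < restrictedSol (of p.1) S p.2 j) ∧
        (j ∉ S → dualVec (of p.1) p.2 (restrictedSol (of p.1) S p.2) j < 0) := fun j => by
    by_cases hj : j ∈ S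
    · refine (continuousAt_const.eventually_lt ((continuous_apply j).continuousAt.comp
        (continuousAt_restrictedSol hA' S x)) ?_).mono fun p hp => ⟨fun _ => hp, absurd hj⟩
      show 0 < restrictedSol (of A) S x j
      exact hsol ▸ (hmem j).mp hj
    · refine (((continuous_apply j).continuousAt.comp (continuousAt_dualVec_restrictedSol hA' S x)
        ).eventually_lt continuousAt_const ?_).mono fun p hp => ⟨fun h => absurd h hj, fun _ => hp⟩
      show dualVec (of A) x (restrictedSol (of A) S x) j < 0
      exact hsol ▸ (hkkt.2.1 j).lt_of_ne (hstrict j (hoff j hj))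
  filter_upwards [isOpen_setOf_linearIndependent_col.mem_nhds hA, eventually_all.mpr hsigns]
    with p hp hsigns
  refine ⟨hp, fun w hw => ?_⟩
  have hp' := mulVec_injective_iff.mpr hp
  set u := restrictedSol (of p.1) S p.2
  obtain ⟨huoff, huS⟩ := (restrictedSol_eq_iff hp' S p.2 u).mp rfl
  have hukkt : IsKKT (of p.1) p.2 u := by
    refine ⟨fun j => ?_, fun j => ?_, fun j hj => huS j ?_⟩
    · by_cases hj : j ∈ S
      exacts [((hsigns j).1 hj).le, (huoff j hj).ge]
    · by_cases hj : j ∈ S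
      exacts [(huS j hj).le, ((hsigns j).2 hj).le]
    · by_contra h
      exact hj.ne' (huoff j h)
  rw [hw.eq_of_isKKT hp' hukkt]
  ext j
  by_cases hj : j ∈ S
  · exact iff_of_true ((hsigns j).1 hj) ((hmem j).mp hj)
  · simp [huoff j hj, hoff j hj]

theorem IsNNLS.mem_degenerateSet (hA : LinearIndependent ℝ (of A).col) (hv : IsNNLS (of A) x v)
    {j : Fin s} (hj0 : v j = 0) (hj : dualVec (of A) x v j = 0) : (A, x) ∈ degenerateSet r s :=
  mem_iUnion₂.mpr ⟨Finset.univ.filter (0 < v ·), j, mem_iUnion.mpr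
    ⟨by simp [hj0], hA, by rwa [hv.restrictedSol_eq (mulVec_injective_iff.mpr hA)]⟩⟩

end Support

theorem nonneg_subset_closure_interior (r s : ℕ) :
    {p : (Fin r → Fin s → ℝ) × (Fin r → ℝ) | (∀ i j, 0 ≤ p.1 i j) ∧ ∀ i, 0 ≤ p.2 i} ⊆
      closure (interior {p | (∀ i j, 0 ≤ p.1 i j) ∧ ∀ i, 0 ≤ p.2 i}) := by
  have h : {p : (Fin r → Fin s → ℝ) × (Fin r → ℝ) | (∀ i j, 0 ≤ p.1 i j) ∧ ∀ i, 0 ≤ p.2 i}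
      = (univ.pi fun _ => univ.pi fun _ => Ici 0) ×ˢ univ.pi fun _ => Ici 0 := by
    ext; simp only [mem_ofPred_eq, mem_prod, mem_univ_pi, mem_Ici]
  rw [h, interior_prod_eq, closure_prod_eq]
  simp only [interior_pi_set finite_univ, interior_Ici, closure_pi_set, closure_Ioi, subset_refl]

/-- the complement of `U_{r,s}` in `ℝ₊^{r×s} × ℝ₊^r` has Lebesgue measure
zero; consequently `U_{r,s}` is dense (in the orthant) and of full measure. -/
theorem locally_constant_support_set_full_measure {r s : ℕ} (hrs : s ≤ r)
    (Q : (Fin r → Fin s → ℝ) → (Fin r → ℝ) → (Fin s → ℝ))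
    (hQ : ∀ A x, (∀ i j, 0 ≤ A i j) → (∀ i, 0 ≤ x i) → (Matrix.of A).rank = s →
      IsNNLS (Matrix.of A) x (Q A x))
    (P D U : Set ((Fin r → Fin s → ℝ) × (Fin r → ℝ)))
    (hP : P = {p | (∀ i j, 0 ≤ p.1 i j) ∧ ∀ i, 0 ≤ p.2 i})
    (hD : D = {p | p ∈ P ∧ (Matrix.of p.1).rank = s})
    (hU : U = {p | p ∈ D ∧ ∃ N : Set ((Fin r → Fin s → ℝ) × (Fin r → ℝ)),
      IsOpen N ∧ p ∈ N ∧ N ∩ P ⊆ D ∧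
        ∀ p' ∈ N ∩ P, {j | 0 < Q p'.1 p'.2 j} = {j | 0 < Q p.1 p.2 j}}) :
    volume (P \ U) = 0 ∧ P ⊆ closure U := by
  have hrank : ∀ p : (Fin r → Fin s → ℝ) × (Fin r → ℝ),
      (of p.1).rank = s ↔ LinearIndependent ℝ (of p.1).col :=
    fun p => rank_eq_iff_linearIndependent_col _
  have hNNLS : ∀ p ∈ P, LinearIndependent ℝ (of p.1).col → IsNNLS (of p.1) p.2 (Q p.1 p.2) :=
    fun p hp hA => hQ p.1 p.2 (hP ▸ hp).1 (hP ▸ hp).2 ((hrank p).mpr hA)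
  have hstable : ∀ p ∈ P, LinearIndependent ℝ (of p.1).col →
      (∀ j, Q p.1 p.2 j = 0 → dualVec (of p.1) p.2 (Q p.1 p.2) j ≠ 0) → p ∈ U := by
    intro p hp hA hstrict
    obtain ⟨N, hN, hNopen, hpN⟩ :=
      mem_nhds_iff.mp ((hNNLS p hp hA).eventually_support_eq hA hstrict)
    rw [hU, hD]
    exact ⟨⟨hp, (hrank p).mpr hA⟩, N, hNopen, hpN, fun q hq => ⟨hq.2, (hrank q).mpr (hN hq.1).1⟩,
      fun q hq => (hN hq.1).2 _ (hNNLS q hq.2 (hN hq.1).1)⟩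
  have hnull : volume (P \ U) = 0 := by
    refine measure_mono_null (fun p ⟨hp, hpU⟩ => ?_) (measure_union_null
      (volume_setOf_not_linearIndependent_col hrs) volume_degenerateSet)
    by_cases hA : LinearIndependent ℝ (of p.1).col
    · obtain ⟨j, hj0, hj⟩ : ∃ j, Q p.1 p.2 j = 0 ∧ dualVec (of p.1) p.2 (Q p.1 p.2) j = 0 := by
        by_contra! h
        exact hpU (hstable p hp hA h)
      exact Or.inr ((hNNLS p hp hA).mem_degenerateSet hA hj0 hj)
    · exact Or.inl hA
  have : (volume : Measure ((Fin r → Fin s → ℝ) × (Fin r → ℝ))).IsOpenPosMeasure :=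
    Measure.prod.instIsOpenPosMeasure
  exact ⟨hnull,
    subset_closure_of_measure_diff_eq_zero hnull (hP ▸ nonneg_subset_closure_interior r s)⟩
end

section
/- Suppose (A, x) ∈ U_{r,s} and T = supp q(A,x). Then for each row index i, the partial derivative of q(A,x) with respect to the i-th row of A satisfies: its (T × T) block equals −(A_{:,T}†)_{:,i} (A_{:,T}† x)ᵀ + ((I − A_{:,T} A_{:,T}†) x)_i · A_{:,T}† (A_{:,T}†)ᵀ, and all entries outside T × T are zero. -/
open Matrix

/-!
Fermat's rule along the coordinate directions shows that an NNLS solution `v` satisfies the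
normal equations `Aᵀ (x - A v) = 0` on its support `T`, so `v` is the least squares solution
`A_T† x` on `T`, padded by zeros. As long as the support stays `T` and the rank stays full, this
formula persists. Replacing row `i` of `A_T` by `b` turns the Gram matrix into `G₀ + b bᵀ` and
`A_Tᵀ x` into `c₀ + xᵢ b`, so the derivative in `b` follows from `d(G⁻¹) = -G⁻¹ (dG) G⁻¹`.
-/

open Function Filter Topology

namespace Matrix

section FullColumnRank

variable {m n : Type*} [Fintype m] [Fintype n] [DecidableEq n]

theorem isUnit_transpose_mul_self_iff_rank_eq {A : Matrix m n ℝ} :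
    IsUnit (Aᵀ * A) ↔ A.rank = Fintype.card n := by
  rw [← rank_transpose_mul_self, ← mulVec_surjective_iff_isUnit, ← coe_mulVecLin,
    ← LinearMap.range_eq_top]
  refine ⟨fun h => ?_, fun h => Submodule.eq_top_of_finrank_eq ?_⟩
  · rw [rank, h, finrank_top, Module.finrank_fintype_fun_eq_card]
  · rw [Module.finrank_fintype_fun_eq_card, ← h, rank]

theorem posDef_transpose_mul_self_of_isUnit {A : Matrix m n ℝ} (hA : IsUnit (Aᵀ * A)) :
    (Aᵀ * A).PosDef := by
  refine conjTranspose_eq_transpose_of_trivial A ▸ PosDef.conjTranspose_mul_self A ?_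
  intro u v huv
  exact mulVec_injective_iff_isUnit.mpr hA (by rw [← mulVec_mulVec, huv, mulVec_mulVec])

theorem isUnit_transpose_mul_self_submatrix {k : Type*} [Fintype k] [DecidableEq k]
    {A : Matrix m n ℝ} (hA : IsUnit (Aᵀ * A)) {f : k → n} (hf : Injective f) :
    IsUnit ((A.submatrix id f)ᵀ * A.submatrix id f) := by
  rw [transpose_submatrix, ← submatrix_mul _ _ _ _ _ bijective_id]
  exact ((posDef_transpose_mul_self_of_isUnit hA).submatrix hf).isUnit

end FullColumnRank

theorem submatrix_mulVec_eq_mulVec_extend {m n k R : Type*} [Fintype n] [Fintype k] [Semiring R]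
    (A : Matrix m n R) {f : k → n} (hf : Injective f) (c : k → R) :
    A.submatrix id f *ᵥ c = A *ᵥ extend f c 0 := by
  ext i
  symm
  calc ∑ j, A i j * extend f c 0 j
      = ∑ j ∈ Finset.univ.map ⟨f, hf⟩, A i j * extend f c 0 j := by
        refine (Finset.sum_subset (Finset.subset_univ _) fun j _ hj => ?_).symm
        simp only [Finset.mem_map, Finset.mem_univ, true_and, Embedding.coeFn_mk] at hj
        simp [extend_apply' _ _ _ hj]
    _ = ∑ x, A i (f x) * c x := by simp [hf.extend_apply]

section UpdateRow

variable {m n R : Type*} [Fintype m] [DecidableEq m] [CommRing R]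

theorem transpose_updateRow_mul_updateRow (B : Matrix m n R) (i : m) (b : n → R) :
    (B.updateRow i b)ᵀ * B.updateRow i b
      = (B.updateRow i 0)ᵀ * B.updateRow i 0 + vecMulVec b b := by
  ext β γ
  simp [mul_apply, updateRow_apply, vecMulVec_apply, Fintype.sum_eq_add_sum_compl i,
    Finset.sum_ite_of_false]
  ring

theorem transpose_updateRow_mulVec (B : Matrix m n R) (i : m) (b : n → R) (x : m → R) :
    (B.updateRow i b)ᵀ *ᵥ x = (B.updateRow i 0)ᵀ *ᵥ x + x i • b := by
  ext β
  simp [mulVec, dotProduct, updateRow_apply, Fintype.sum_eq_add_sum_compl i,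
    Finset.sum_ite_of_false]
  ring

end UpdateRow

theorem updateRow_submatrix_id {m n k α : Type*} [DecidableEq m] (A : Matrix m n α) (i : m)
    (b : n → α) (f : k → n) :
    (A.submatrix id f).updateRow i (b ∘ f) = (A.updateRow i b).submatrix id f := by
  ext i' j
  by_cases h : i' = i <;> simp [updateRow_apply, h]

def padByZero {ι R : Type*} [DecidableEq ι] [Zero R] (T : Finset ι)
    (D : Matrix {j // j ∈ T} {j // j ∈ T} R) : Matrix ι ι R :=
  of fun β α => if hβ : β ∈ T then if hα : α ∈ T then D ⟨β, hβ⟩ ⟨α, hα⟩ else 0 else 0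

theorem extendByZero_comp_mulVecLin_comp_funLeft {ι R : Type*} [Fintype ι] [DecidableEq ι]
    [CommSemiring R] (T : Finset ι) (D : Matrix {j // j ∈ T} {j // j ∈ T} R) :
    ExtendByZero.linearMap R Subtype.val ∘ₗ D.mulVecLin ∘ₗ LinearMap.funLeft R R Subtype.val
      = (padByZero T D).mulVecLin := by
  ext α β
  simp only [LinearMap.coe_comp, Function.comp_apply, LinearMap.coe_single, mulVecLin_apply,
    mulVec_single_one, ExtendByZero.linearMap_apply, padByZero]
  by_cases hβ : β ∈ T
  · rw [show β = ((⟨β, hβ⟩ : {j // j ∈ T}) : ι) from rfl, Subtype.val_injective.extend_apply]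
    by_cases hα : α ∈ T
    · have : LinearMap.funLeft R R Subtype.val (Pi.single α 1) = Pi.single ⟨α, hα⟩ (1 : R) := by
        funext γ
        simp [Pi.single_apply, Subtype.ext_iff]
      simp [this, hβ, hα]
    · have : LinearMap.funLeft R R Subtype.val (Pi.single α 1) = (0 : {j // j ∈ T} → R) := by
        funext γ
        simp [ne_of_mem_of_not_mem γ.2 hα]
      simp [this, hβ, hα]
  · rw [extend_apply' _ _ _ fun ⟨γ, hγ⟩ => hβ (hγ ▸ γ.2)]
    simp [hβ]

end Matrix

section Derivative

attribute [local instance] Matrix.linftyOpNormedAddCommGroup Matrix.linftyOpNormedSpace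
  Matrix.linftyOpNormedRing Matrix.linftyOpNormedAlgebra

variable {n : Type*} [Fintype n] [DecidableEq n]

theorem hasFDerivAt_inv_add_vecMulVec_mulVec {G₀ G : Matrix n n ℝ} {c₀ b₀ : n → ℝ} (t : ℝ)
    (hG : G₀ + vecMulVec b₀ b₀ = G) (hGu : IsUnit G) :
    HasFDerivAt (fun b => (G₀ + vecMulVec b b)⁻¹ *ᵥ (c₀ + t • b))
      (mulVecLin ((t - b₀ ⬝ᵥ (G⁻¹ *ᵥ (c₀ + t • b₀))) • G⁻¹
        - vecMulVec (G⁻¹ *ᵥ b₀) (G⁻¹ *ᵥ (c₀ + t • b₀)))).toContinuousLinearMap b₀ := by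
  obtain ⟨u, rfl⟩ := hGu
  have hGd := ((vecMulVecBilin ℝ ℝ).toContinuousBilinearMap.hasFDerivAt_of_bilinear
    (hasFDerivAt_id b₀) (hasFDerivAt_id b₀)).const_add G₀
  have hcd := ((hasFDerivAt_id (𝕜 := ℝ) b₀).const_smul t).const_add c₀
  have hinv := (hG ▸ hasFDerivAt_ringInverse (𝕜 := ℝ) u).comp b₀ hGd
  simp only [nonsing_inv_eq_ringInverse]
  refine ((mulVecBilin ℝ ℝ : Matrix n n ℝ →ₗ[ℝ] (n → ℝ) →ₗ[ℝ] n → ℝ).toContinuousBilinearMap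
    |>.hasFDerivAt_of_bilinear hinv hcd).congr_fderiv ?_
  ext1 h
  change Ring.inverse (G₀ + vecMulVec b₀ b₀) *ᵥ (t • h)
      + (-(((u⁻¹ : (Matrix n n ℝ)ˣ) : Matrix n n ℝ) * (vecMulVec b₀ h + vecMulVec h b₀)
        * ((u⁻¹ : (Matrix n n ℝ)ˣ) : Matrix n n ℝ))) *ᵥ (c₀ + t • b₀) = _
  rw [hG, Ring.inverse_unit, coe_units_inv, LinearMap.coe_toContinuousLinearMap', mulVecLin_apply]
  simp only [neg_mulVec, ← mulVec_mulVec]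
  generalize (↑u : Matrix n n ℝ)⁻¹ *ᵥ (c₀ + t • b₀) = w
  simp only [sub_mulVec, smul_mulVec, vecMulVec_mulVec, add_mulVec, mulVec_add, mulVec_smul,
    op_smul_eq_smul]
  rw [dotProduct_comm h]
  module

end Derivative

section Pinv

variable {m n : Type*} [Fintype m] [Fintype n] [DecidableEq n]

theorem pinv_mul_transpose_pinv {B : Matrix m n ℝ} (hB : IsUnit (Bᵀ * B)) :
    pinv B * (pinv B)ᵀ = (Bᵀ * B)⁻¹ := by
  have hGsymm : (Bᵀ * B)ᵀ = Bᵀ * B := by rw [transpose_mul, transpose_transpose]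
  rw [pinv, transpose_mul, transpose_nonsing_inv, hGsymm, transpose_transpose, Matrix.mul_assoc,
    ← Matrix.mul_assoc Bᵀ, ← Matrix.mul_assoc, nonsing_inv_mul _ ((isUnit_iff_isUnit_det _).mp hB),
    Matrix.one_mul]

/-- The paper's `T × T` block `-(B†)_{:,i} (B† x)ᵀ + ((I - B B†) x)_i B† (B†)ᵀ`,
with `B = A_{:,T}`. -/
noncomputable def pinvRowDeriv (B : Matrix m n ℝ) (i : m) (x : m → ℝ) : Matrix n n ℝ :=
  (x i - ((B * pinv B) *ᵥ x) i) • (pinv B * (pinv B)ᵀ)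
    - vecMulVec (fun β => pinv B β i) (pinv B *ᵥ x)

variable [DecidableEq m]

theorem hasFDerivAt_pinv_updateRow_mulVec {B : Matrix m n ℝ} (hB : IsUnit (Bᵀ * B)) (i : m)
    (x : m → ℝ) :
    HasFDerivAt (fun b => pinv (B.updateRow i b) *ᵥ x)
      (pinvRowDeriv B i x).mulVecLin.toContinuousLinearMap (B i) := by
  have hG : (B.updateRow i 0)ᵀ * B.updateRow i 0 + vecMulVec (B i) (B i) = Bᵀ * B := by
    rw [← transpose_updateRow_mul_updateRow, updateRow_eq_self]
  have hc : (B.updateRow i 0)ᵀ *ᵥ x + x i • B i = Bᵀ *ᵥ x := by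
    rw [← transpose_updateRow_mulVec, updateRow_eq_self]
  have hw : (Bᵀ * B)⁻¹ *ᵥ (Bᵀ *ᵥ x) = pinv B *ᵥ x := by rw [pinv, mulVec_mulVec]
  have hBw : B i ⬝ᵥ (pinv B *ᵥ x) = ((B * pinv B) *ᵥ x) i := by rw [← mulVec_mulVec]; rfl
  have hcol : (Bᵀ * B)⁻¹ *ᵥ B i = fun β => pinv B β i := rfl
  have := hasFDerivAt_inv_add_vecMulVec_mulVec (c₀ := (B.updateRow i 0)ᵀ *ᵥ x) (x i) hG hB
  rw [hc, hw, hBw, hcol, ← pinv_mul_transpose_pinv hB] at this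
  rw [pinvRowDeriv]
  convert this using 2 with b
  rw [pinv, ← mulVec_mulVec, transpose_updateRow_mul_updateRow, transpose_updateRow_mulVec]

theorem hasFDerivAt_extend_pinv_updateRow_submatrix {A : Matrix m n ℝ}
    (hA : IsUnit (Aᵀ * A)) (T : Finset n) (i : m) (x : m → ℝ) :
    HasFDerivAt
      (fun a => extend Subtype.val
        (pinv ((A.submatrix id (Subtype.val : {j // j ∈ T} → n)).updateRow i (a ∘ Subtype.val))
          *ᵥ x) 0)
      (padByZero T (pinvRowDeriv (A.submatrix id Subtype.val) i x)).mulVecLin.toContinuousLinearMap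
      (A i) := by
  have hR : HasFDerivAt
      (LinearMap.funLeft ℝ ℝ (Subtype.val : {j // j ∈ T} → n)).toContinuousLinearMap _ (A i) :=
    ContinuousLinearMap.hasFDerivAt _
  rw [← extendByZero_comp_mulVecLin_comp_funLeft]
  exact (ExtendByZero.linearMap ℝ Subtype.val).toContinuousLinearMap.hasFDerivAt.comp (A i)
    ((hasFDerivAt_pinv_updateRow_mulVec
      (isUnit_transpose_mul_self_submatrix hA Subtype.val_injective) i x).comp (A i) hR)

end Pinv

namespace IsNNLS

variable {r s : ℕ} {A : Matrix (Fin r) (Fin s) ℝ} {x : Fin r → ℝ} {v : Fin s → ℝ}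

theorem transpose_mulVec_sub_mulVec_eq_zero (hv : IsNNLS A x v) {j : Fin s} (hj : 0 < v j) :
    (Aᵀ *ᵥ (x - A *ᵥ v)) j = 0 := by
  set e := x - A *ᵥ v
  set φ : ℝ → ℝ := fun t => ∑ k, (e k - t * A k j) ^ 2
  -- `φ t` is the objective at `v + t eⱼ`, which is feasible for `|t| < v j`
  have hmin : IsLocalMin φ 0 := by
    filter_upwards [Metric.ball_mem_nhds (0 : ℝ) hj] with t ht
    have hfeas : ∀ l, 0 ≤ (v + t • Pi.single j 1 : Fin s → ℝ) l := by
      intro l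
      rcases eq_or_ne l j with rfl | hl
      · simp only [Pi.add_apply, Pi.smul_apply, Pi.single_eq_same, smul_eq_mul, mul_one]
        linarith [(abs_lt.mp (mem_ball_zero_iff.mp ht)).1]
      · simpa [hl] using hv.1 l
    simpa [φ, e, mulVec_add, mulVec_smul, mulVec_single_one, sub_sub] using hv.2 _ hfeas
  have hderiv : HasDerivAt φ (∑ k, 2 * e k * -A k j) 0 := by
    simpa using HasDerivAt.fun_sum (u := Finset.univ) fun k _ =>
      (((hasDerivAt_id (0 : ℝ)).mul_const (A k j)).const_sub (e k)).pow 2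
  calc (Aᵀ *ᵥ e) j = -(1 / 2) * ∑ k, 2 * e k * -A k j := by
        simp only [mulVec, dotProduct, transpose_apply, Finset.mul_sum]
        exact Finset.sum_congr rfl fun k _ => by ring
    _ = 0 := by rw [hmin.hasDerivAt_eq_zero hderiv, mul_zero]

theorem eq_extend_pinv (hv : IsNNLS A x v) (hA : IsUnit (Aᵀ * A)) {T : Finset (Fin s)}
    (hT : ∀ j, 0 < v j ↔ j ∈ T) :
    v = extend Subtype.val
      (pinv (A.submatrix id (Subtype.val : {j // j ∈ T} → Fin s)) *ᵥ x) 0 := by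
  set B := A.submatrix id (Subtype.val : {j // j ∈ T} → Fin s)
  set vT : {j // j ∈ T} → ℝ := fun α => v α
  have hv_eq : v = extend Subtype.val vT 0 := by
    funext j
    by_cases hj : j ∈ T
    · exact (Subtype.val_injective.extend_apply vT 0 ⟨j, hj⟩).symm
    · rw [extend_apply' _ _ _ fun ⟨α, hα⟩ => hj (hα ▸ α.2)]
      exact le_antisymm (not_lt.mp (mt (hT j).1 hj)) (hv.1 j)
  have hAv : A *ᵥ v = B *ᵥ vT := by
    rw [submatrix_mulVec_eq_mulVec_extend _ Subtype.val_injective, ← hv_eq]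
  have hnormal : Bᵀ *ᵥ (x - B *ᵥ vT) = 0 := funext fun α => by
    rw [← hAv]
    exact hv.transpose_mulVec_sub_mulVec_eq_zero ((hT α).2 α.2)
  have hGu : IsUnit (Bᵀ * B).det :=
    (isUnit_iff_isUnit_det _).mp (isUnit_transpose_mul_self_submatrix hA Subtype.val_injective)
  rw [mulVec_sub, sub_eq_zero, mulVec_mulVec] at hnormal
  rw [hv_eq, pinv, ← mulVec_mulVec, hnormal, mulVec_mulVec, nonsing_inv_mul _ hGu, one_mulVec]

end IsNNLS

theorem eventually_nnls_updateRow_eq_extend_pinv {r s : ℕ}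
    {Q : (Fin r → Fin s → ℝ) → (Fin r → ℝ) → (Fin s → ℝ)}
    (hQ : ∀ A x, (∀ i j, 0 ≤ A i j) → (∀ i, 0 ≤ x i) → (Matrix.of A).rank = s →
      IsNNLS (Matrix.of A) x (Q A x))
    {A : Matrix (Fin r) (Fin s) ℝ} (hA0 : ∀ i j, 0 ≤ A i j) (hA : IsUnit (Aᵀ * A))
    {x : Fin r → ℝ} (hx0 : ∀ i, 0 ≤ x i) {N : Set ((Fin r → Fin s → ℝ) × (Fin r → ℝ))}
    (hN : IsOpen N) (hAN : ((A : Fin r → Fin s → ℝ), x) ∈ N) {T : Finset (Fin s)}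
    (hNT : ∀ p ∈ N, (∀ i j, 0 ≤ p.1 i j) → (∀ i, 0 ≤ p.2 i) → (Matrix.of p.1).rank = s →
      ∀ j, 0 < Q p.1 p.2 j ↔ j ∈ T) (i : Fin r) :
    ∀ᶠ a in 𝓝[{a | ∀ j, 0 ≤ a j}] (A i), Q (A.updateRow i a) x
      = extend Subtype.val
        (pinv ((A.submatrix id (Subtype.val : {j // j ∈ T} → Fin s)).updateRow i
          (a ∘ Subtype.val)) *ᵥ x) 0 := by
  have hcont : Continuous (A.updateRow i) := continuous_const.matrix_updateRow i continuous_id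
  have hmemN : ∀ᶠ a in 𝓝 (A i), ((A.updateRow i a : Fin r → Fin s → ℝ), x) ∈ N :=
    (hcont.prodMk continuous_const).continuousAt.preimage_mem_nhds
      (hN.mem_nhds (by rw [updateRow_eq_self]; exact hAN))
  have hdet := ((hcont.matrix_transpose.matrix_mul hcont).matrix_det).continuousAt.eventually_ne
    (x := A i) (by rw [updateRow_eq_self]; exact ((isUnit_iff_isUnit_det _).mp hA).ne_zero)
  filter_upwards [nhdsWithin_le_nhds hmemN, nhdsWithin_le_nhds hdet, self_mem_nhdsWithin]
    with a haN hadet ha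
  have haG : IsUnit ((A.updateRow i a)ᵀ * A.updateRow i a) :=
    (isUnit_iff_isUnit_det _).mpr (isUnit_iff_ne_zero.mpr hadet)
  have hnonneg : ∀ i' j, 0 ≤ A.updateRow i a i' j := fun i' j => by
    rw [updateRow_apply]; split_ifs; exacts [ha j, hA0 i' j]
  have hrank : (A.updateRow i a).rank = s := by
    simpa using isUnit_transpose_mul_self_iff_rank_eq.mp haG
  have hnnls : IsNNLS (A.updateRow i a) x (Q (A.updateRow i a) x) := hQ _ x hnonneg hx0 hrank
  rw [hnnls.eq_extend_pinv haG (hNT _ haN hnonneg hx0 hrank), updateRow_submatrix_id]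

theorem nnls_deriv_in_A_row_general {r s : ℕ}
    (Q : (Fin r → Fin s → ℝ) → (Fin r → ℝ) → (Fin s → ℝ))
    (hQ : ∀ A x, (∀ i j, 0 ≤ A i j) → (∀ i, 0 ≤ x i) → (Matrix.of A).rank = s →
      IsNNLS (Matrix.of A) x (Q A x))
    (A : Matrix (Fin r) (Fin s) ℝ) (hA0 : ∀ i j, 0 ≤ A i j) (hArank : A.rank = s)
    (x : Fin r → ℝ) (hx0 : ∀ i, 0 ≤ x i)
    (hU : ∃ N : Set ((Fin r → Fin s → ℝ) × (Fin r → ℝ)), IsOpen N ∧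
      ((fun i j => A i j), x) ∈ N ∧
      ∀ p ∈ N, (∀ i j, 0 ≤ p.1 i j) → (∀ i, 0 ≤ p.2 i) → (Matrix.of p.1).rank = s →
        {j | 0 < Q p.1 p.2 j} = {j | 0 < Q (fun i j => A i j) x j})
    (T : Finset (Fin s))
    (hT : T = Finset.univ.filter (fun j => 0 < Q (fun i j => A i j) x j))
    (AT : Matrix (Fin r) {j // j ∈ T} ℝ)
    (hAT : AT = A.submatrix id (Subtype.val : {j // j ∈ T} → Fin s))
    (i : Fin r)
    (M : Matrix (Fin s) (Fin s) ℝ)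
    (hM : ∀ β α, M β α =
      if hβ : β ∈ T then
        if hα : α ∈ T then
          -(pinv AT ⟨β, hβ⟩ i * (pinv AT).mulVec x ⟨α, hα⟩) +
            (x i - (AT * pinv AT).mulVec x i) * (pinv AT * (pinv AT)ᵀ) ⟨β, hβ⟩ ⟨α, hα⟩
        else 0
      else 0) :
    HasFDerivWithinAt
      (fun a : Fin s → ℝ => Q (fun i' j => if i' = i then a j else A i' j) x)
      (Matrix.mulVecLin M).toContinuousLinearMap {a : Fin s → ℝ | ∀ j, 0 ≤ a j} (A i) := by
  obtain ⟨N, hN, hAN, hNsupp⟩ := hU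
  subst hAT
  have hA : IsUnit (Aᵀ * A) := isUnit_transpose_mul_self_iff_rank_eq.mpr (by simpa using hArank)
  have hMD : M = padByZero T (pinvRowDeriv (A.submatrix id Subtype.val) i x) := by
    ext β α
    rw [hM, padByZero, of_apply]
    split_ifs
    · simp only [pinvRowDeriv, Matrix.sub_apply, Matrix.smul_apply, smul_eq_mul, vecMulVec_apply]
      ring
    all_goals rfl
  have hrow : (fun a => Q (fun i' j => if i' = i then a j else A i' j) x)
      = fun a => Q (A.updateRow i a) x :=
    funext fun a => congrArg (Q · x) (funext₂ fun i' j => (updateRow_apply ..).symm)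
  have heq := eventually_nnls_updateRow_eq_extend_pinv hQ hA0 hA hx0 hN hAN (T := T)
    (fun p hp h₁ h₂ h₃ j => by simpa [hT] using Set.ext_iff.mp (hNsupp p hp h₁ h₂ h₃) j) i
  rw [hMD, hrow]
  exact (hasFDerivAt_extend_pinv_updateRow_submatrix hA T i x).hasFDerivWithinAt
    |>.congr_of_eventuallyEq heq (heq.self_of_nhdsWithin (hA0 i))

/-- at a locally-constant-support pair `(A, x)`, the derivative of
`q(A,x)` with respect to the `i`-th row of `A` has `(T × T)` block
`−(A_{:,T}†)_{:,i} (A_{:,T}† x)ᵀ + ((I − A_{:,T} A_{:,T}†) x)_i · A_{:,T}† (A_{:,T}†)ᵀ`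
and vanishes outside `T × T`. -/
theorem nnls_deriv_in_A_row {r s : ℕ} (hrs : s ≤ r)
    (Q : (Fin r → Fin s → ℝ) → (Fin r → ℝ) → (Fin s → ℝ))
    (hQ : ∀ A x, (∀ i j, 0 ≤ A i j) → (∀ i, 0 ≤ x i) → (Matrix.of A).rank = s →
      IsNNLS (Matrix.of A) x (Q A x))
    (A : Matrix (Fin r) (Fin s) ℝ) (hA0 : ∀ i j, 0 ≤ A i j) (hArank : A.rank = s)
    (x : Fin r → ℝ) (hx0 : ∀ i, 0 ≤ x i)
    (hU : ∃ N : Set ((Fin r → Fin s → ℝ) × (Fin r → ℝ)), IsOpen N ∧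
      ((fun i j => A i j), x) ∈ N ∧
      ∀ p ∈ N, (∀ i j, 0 ≤ p.1 i j) → (∀ i, 0 ≤ p.2 i) → (Matrix.of p.1).rank = s →
        {j | 0 < Q p.1 p.2 j} = {j | 0 < Q (fun i j => A i j) x j})
    (T : Finset (Fin s))
    (hT : T = Finset.univ.filter (fun j => 0 < Q (fun i j => A i j) x j))
    (AT : Matrix (Fin r) {j // j ∈ T} ℝ)
    (hAT : AT = A.submatrix id (Subtype.val : {j // j ∈ T} → Fin s))
    (i : Fin r)
    (M : Matrix (Fin s) (Fin s) ℝ)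
    (hM : ∀ β α, M β α =
      if hβ : β ∈ T then
        if hα : α ∈ T then
          -(pinv AT ⟨β, hβ⟩ i * (pinv AT).mulVec x ⟨α, hα⟩) +
            (x i - (AT * pinv AT).mulVec x i) * (pinv AT * (pinv AT)ᵀ) ⟨β, hβ⟩ ⟨α, hα⟩
        else 0
      else 0) :
    HasFDerivWithinAt
      (fun a : Fin s → ℝ => Q (fun i' j => if i' = i then a j else A i' j) x)
      (Matrix.mulVecLin M).toContinuousLinearMap {a : Fin s → ℝ | ∀ j, 0 ≤ a j} (A i) :=
  nnls_deriv_in_A_row_general Q hQ A hA0 hArank x hx0 hU T hT AT hAT i M hM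
end

section
/- Suppose (Aᵏ, xᵏ) → (A, x) within the set of pairs where the matrix has full column rank and all entries are nonnegative, and suppose the support of q(Aᵏ, xᵏ) is the same set T₁ for all k while supp q(A,x) = T₀ ≠ T₁. Then T₀ ⊊ T₁, and for every index i ∈ T₁ \ T₀ the corresponding entry of A_{:,T₁}† x is zero. -/
/-!
Write `vₖ = q(Aₖ, xₖ)`. Since `vₖ` is positive exactly on `T₁`, the KKT conditions say that its
restriction to `T₁` solves the unconstrained least squares problem for `Aₖ[:, T₁]`, i.e. equals
`Aₖ[:, T₁]† xₖ`. The pseudoinverse is continuous at the full-column-rank matrix `A[:, T₁]`, so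
`vₖ` converges to the extension by zero `v` of `A[:, T₁]† x`. Being a limit of nonnegative least
squares solutions, `v` is one for `(A, x)`, hence `v = q(A, x)` by uniqueness. Thus
`T₀ = supp v ⊆ T₁`, and the entries of `A[:, T₁]† x` off `T₀` vanish.
-/

open Matrix

open Filter Topology

namespace Matrix

variable {m n ι K : Type*} [Fintype n] [Fintype ι]

theorem mulVec_injective_of_rank_eq_card [Field K] {B : Matrix m n K}
    (h : B.rank = Fintype.card n) : Function.Injective B.mulVec := by
  rw [mulVec_injective_iff, linearIndependent_iff_card_eq_finrank_span, ← h]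
  exact rank_eq_finrank_span_cols B

theorem mulVec_injective_submatrix [CommSemiring K] {B : Matrix m n K}
    (hB : Function.Injective B.mulVec) {e : ι → n} (he : e.Injective) :
    Function.Injective (B.submatrix id e).mulVec := by
  rw [mulVec_injective_iff] at hB ⊢
  exact hB.comp e he

theorem submatrix_mulVec_comp [NonUnitalNonAssocSemiring K] (B : Matrix m n K) {e : ι → n} (he : e.Injective)
    {v : n → K} (hv : ∀ j ∉ Set.range e, v j = 0) :
    B.submatrix id e *ᵥ (v ∘ e) = B *ᵥ v := by
  ext i
  exact Fintype.sum_of_injective e he _ _ (fun j hj => by simp [hv j hj]) fun _ => rfl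

section Real

variable [Fintype m]

theorem isUnit_det_transpose_mul_self [DecidableEq n] {C : Matrix m n ℝ}
    (hC : Function.Injective C.mulVec) : IsUnit (Cᵀ * C).det := by
  have h := (PosDef.conjTranspose_mul_self C hC).isUnit
  rwa [conjTranspose_eq_transpose_of_trivial, isUnit_iff_isUnit_det] at h

theorem pinv_mulVec_eq_of_transpose_mulVec_sub_eq_zero [DecidableEq n] {C : Matrix m n ℝ}
    (hC : Function.Injective C.mulVec) {y : m → ℝ} {u : n → ℝ}
    (h : Cᵀ *ᵥ (y - C *ᵥ u) = 0) : pinv C *ᵥ y = u := by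
  have hnormal : Cᵀ *ᵥ y = (Cᵀ * C) *ᵥ u := by
    rw [← mulVec_mulVec, ← sub_eq_zero, ← mulVec_sub, h]
  rw [pinv, ← mulVec_mulVec, hnormal, mulVec_mulVec,
    nonsing_inv_mul _ (isUnit_det_transpose_mul_self hC), one_mulVec]

theorem continuousAt_pinv [DecidableEq n] {C : Matrix m n ℝ}
    (hC : Function.Injective C.mulVec) : ContinuousAt pinv C := by
  have hinv : ContinuousAt (fun M : Matrix n n ℝ => M⁻¹) (Cᵀ * C) :=
    continuousAt_matrix_inv _ <| by
      rw [Ring.inverse_eq_inv']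
      exact continuousAt_inv₀ (isUnit_det_transpose_mul_self hC).ne_zero
  have hgram : Continuous fun D : Matrix m n ℝ => Dᵀ * D :=
    continuous_id.matrix_transpose.matrix_mul continuous_id
  have hmul : Continuous fun P : Matrix n n ℝ × Matrix n m ℝ => P.1 * P.2 :=
    continuous_fst.matrix_mul continuous_snd
  exact hmul.continuousAt.comp (f := fun D : Matrix m n ℝ => ((Dᵀ * D)⁻¹, Dᵀ))
    ((hinv.comp (f := fun D : Matrix m n ℝ => Dᵀ * D) hgram.continuousAt).prodMk
      continuous_id.matrix_transpose.continuousAt)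

theorem tendsto_pinv_mulVec [DecidableEq n] {α : Type*} {l : Filter α} {Ck : α → Matrix m n ℝ}
    {yk : α → m → ℝ} {C : Matrix m n ℝ} {y : m → ℝ} (hC : Function.Injective C.mulVec)
    (hCk : Tendsto Ck l (𝓝 C)) (hyk : Tendsto yk l (𝓝 y)) :
    Tendsto (fun k => pinv (Ck k) *ᵥ yk k) l (𝓝 (pinv C *ᵥ y)) := by
  have hmulVec : Continuous fun p : Matrix n m ℝ × (m → ℝ) => p.1 *ᵥ p.2 :=
    continuous_fst.matrix_mulVec continuous_snd
  have hpair : Tendsto (fun k => (pinv (Ck k), yk k)) l (𝓝 (pinv C, y)) :=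
    ((continuousAt_pinv hC).tendsto.comp hCk).prodMk_nhds hyk
  have hlim := (hmulVec.tendsto (pinv C, y)).comp hpair
  exact hlim

theorem sum_sq_sub_mulVec_add_smul (B : Matrix m n ℝ) (y : m → ℝ) (v u : n → ℝ) (t : ℝ) :
    ∑ i, (y i - (B *ᵥ (v + t • u)) i) ^ 2 =
      ∑ i, (y i - (B *ᵥ v) i) ^ 2 - 2 * t * ((y - B *ᵥ v) ⬝ᵥ (B *ᵥ u))
        + t ^ 2 * ((B *ᵥ u) ⬝ᵥ (B *ᵥ u)) := by
  simp only [dotProduct, Finset.mul_sum, ← Finset.sum_sub_distrib, ← Finset.sum_add_distrib,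
    mulVec_add, mulVec_smul, Pi.add_apply, Pi.smul_apply, Pi.sub_apply, smul_eq_mul]
  exact Finset.sum_congr rfl fun i _ => by ring

end Real

end Matrix

theorem tendsto_dite_of_tendsto_restrict {α n M : Type*} [TopologicalSpace M] [Zero M]
    [DecidableEq n] {l : Filter α} {T : Finset n} {f : α → n → M} {g : T → M}
    (hf : ∀ k, ∀ j ∉ T, f k j = 0) (hg : Tendsto (fun k (p : T) => f k p) l (𝓝 g)) :
    Tendsto f l (𝓝 fun j => if h : j ∈ T then g ⟨j, h⟩ else 0) := by
  refine tendsto_pi_nhds.2 fun j => ?_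
  by_cases hj : j ∈ T
  · simpa only [dif_pos hj] using tendsto_pi_nhds.1 hg ⟨j, hj⟩
  · simpa only [dif_neg hj, hf _ j hj] using tendsto_const_nhds

namespace IsNNLS

variable {r s : ℕ} {B : Matrix (Fin r) (Fin s) ℝ} {y : Fin r → ℝ} {v w : Fin s → ℝ}

theorem eq_of_injective (hB : Function.Injective B.mulVec) (hv : IsNNLS B y v)
    (hw : IsNNLS B y w) : v = w := by
  have h_end := sum_sq_sub_mulVec_add_smul B y v (w - v) 1
  have h_mid := sum_sq_sub_mulVec_add_smul B y v (w - v) (1 / 2)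
  rw [one_smul, add_sub_cancel] at h_end
  have h_mid_nonneg : ∀ j, 0 ≤ (v + (1 / 2 : ℝ) • (w - v)) j := fun j => by
    simp only [Pi.add_apply, Pi.smul_apply, Pi.sub_apply, smul_eq_mul]
    linarith [hv.1 j, hw.1 j]
  -- comparing the two minimizers with their midpoint forces `‖B (w - v)‖² ≤ 0`
  have hC : (B *ᵥ (w - v)) ⬝ᵥ (B *ᵥ (w - v)) ≤ 0 := by
    linarith [hv.2 w hw.1, hw.2 v hv.1, hv.2 _ h_mid_nonneg]
  have hBwv : B *ᵥ (w - v) = 0 :=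
    dotProduct_self_eq_zero.mp (le_antisymm hC (Finset.sum_nonneg fun i _ => mul_self_nonneg _))
  exact (sub_eq_zero.mp ((hB.eq_iff' (mulVec_zero B)).mp hBwv)).symm

theorem transpose_mulVec_sub_eq_zero_s12 (hv : IsNNLS B y v) {j : Fin s} (hj : 0 < v j) :
    (Bᵀ *ᵥ (y - B *ᵥ v)) j = 0 := by
  set g := (Bᵀ *ᵥ (y - B *ᵥ v)) j
  set c := (B *ᵥ Pi.single j 1) ⬝ᵥ (B *ᵥ Pi.single j 1)
  set φ : ℝ → ℝ := fun t => ∑ i, (y i - (B *ᵥ (v + t • Pi.single j 1)) i) ^ 2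
  have hφ : φ = fun t => φ 0 - t * (2 * g) + t ^ 2 * c := by
    have hg : (y - B *ᵥ v) ⬝ᵥ (B *ᵥ Pi.single j 1) = g := by
      rw [mulVec_single_one, dotProduct_comm]; rfl
    funext t
    simp only [φ, sum_sq_sub_mulVec_add_smul, hg]
    ring
  have hmin : IsLocalMin φ 0 := by
    filter_upwards [lt_mem_nhds (neg_lt_zero.mpr hj)] with t ht
    have hfeas : ∀ i, 0 ≤ (v + t • (Pi.single j 1 : Fin s → ℝ)) i := fun i => by
      rcases eq_or_ne i j with rfl | hij
      · simp only [Pi.add_apply, Pi.smul_apply, Pi.single_eq_same, smul_eq_mul, mul_one]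
        linarith
      · simp [Pi.single_eq_of_ne hij, hv.1 i]
    simpa [φ] using hv.2 _ hfeas
  have hderiv : HasDerivAt φ (-2 * g) 0 := by
    rw [hφ]
    exact (((hasDerivAt_const 0 (φ 0)).sub (hasDerivAt_mul_const (2 * g))).add
      ((hasDerivAt_pow 2 0).mul_const c)).congr_deriv (by norm_num)
  linarith [hmin.hasDerivAt_eq_zero hderiv]

theorem pinv_submatrix_mulVec (hB : Function.Injective B.mulVec) (hv : IsNNLS B y v)
    {T : Finset (Fin s)} (hT : ∀ j, j ∈ T ↔ 0 < v j) :
    pinv (B.submatrix id (Subtype.val : T → Fin s)) *ᵥ y = fun p : T => v p := by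
  have hv_off : ∀ j ∉ Set.range (Subtype.val : T → Fin s), v j = 0 := fun j hj =>
    le_antisymm (not_lt.mp fun h => hj ⟨⟨j, (hT j).2 h⟩, rfl⟩) (hv.1 j)
  refine pinv_mulVec_eq_of_transpose_mulVec_sub_eq_zero
    (mulVec_injective_submatrix hB Subtype.val_injective) ?_
  rw [← Function.comp_def v, submatrix_mulVec_comp B Subtype.val_injective hv_off]
  funext p
  exact hv.transpose_mulVec_sub_eq_zero_s12 ((hT p).1 p.2)

theorem of_tendsto {α : Type*} {l : Filter α} [l.NeBot] {Bk : α → Matrix (Fin r) (Fin s) ℝ}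
    {yk : α → Fin r → ℝ} {vk : α → Fin s → ℝ} (h : ∀ k, IsNNLS (Bk k) (yk k) (vk k))
    (hB : Tendsto Bk l (𝓝 B)) (hy : Tendsto yk l (𝓝 y)) (hv : Tendsto vk l (𝓝 v)) :
    IsNNLS B y v := by
  have hobj : ∀ {wk : α → Fin s → ℝ} {w}, Tendsto wk l (𝓝 w) →
      Tendsto (fun k => ∑ i, (yk k i - (Bk k *ᵥ wk k) i) ^ 2) l
        (𝓝 (∑ i, (y i - (B *ᵥ w) i) ^ 2)) := fun {wk w} hw => by
    have hcont : Continuous fun p : Matrix (Fin r) (Fin s) ℝ × (Fin r → ℝ) × (Fin s → ℝ) =>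
        ∑ i, (p.2.1 i - (p.1 *ᵥ p.2.2) i) ^ 2 := by
      fun_prop
    have hlim := (hcont.tendsto (B, y, w)).comp (hB.prodMk_nhds (hy.prodMk_nhds hw))
    exact hlim
  refine ⟨fun j => ge_of_tendsto' (tendsto_pi_nhds.1 hv j) fun k => (h k).1 j, fun w hw => ?_⟩
  exact le_of_tendsto_of_tendsto' (hobj hv) (hobj tendsto_const_nhds) fun k => (h k).2 w hw

end IsNNLS

theorem support_limit_general {r s : ℕ}
    (Q : (Fin r → Fin s → ℝ) → (Fin r → ℝ) → (Fin s → ℝ))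
    (hQ : ∀ B y, (∀ i j, 0 ≤ B i j) → (∀ i, 0 ≤ y i) → (Matrix.of B).rank = s →
      IsNNLS (Matrix.of B) y (Q B y))
    (Ak : ℕ → Fin r → Fin s → ℝ) (xk : ℕ → Fin r → ℝ)
    (A : Fin r → Fin s → ℝ) (x : Fin r → ℝ)
    (hAk0 : ∀ k i j, 0 ≤ Ak k i j) (hAkrank : ∀ k, (Matrix.of (Ak k)).rank = s)
    (hxk0 : ∀ k i, 0 ≤ xk k i)
    (hA0 : ∀ i j, 0 ≤ A i j) (hArank : (Matrix.of A).rank = s) (hx0 : ∀ i, 0 ≤ x i)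
    (hlim : Filter.Tendsto (fun k => (Ak k, xk k)) Filter.atTop (nhds (A, x)))
    (T₀ T₁ : Finset (Fin s))
    (hT₁ : ∀ k, T₁ = Finset.univ.filter (fun j => 0 < Q (Ak k) (xk k) j))
    (hT₀ : T₀ = Finset.univ.filter (fun j => 0 < Q A x j))
    (hne : T₀ ≠ T₁) :
    T₀ ⊂ T₁ ∧ ∀ j (hj : j ∈ T₁), j ∉ T₀ →
      (pinv ((Matrix.of A).submatrix id
        (Subtype.val : {j // j ∈ T₁} → Fin s))).mulVec x ⟨j, hj⟩ = 0 := by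
  have hinj : ∀ {C : Fin r → Fin s → ℝ}, (Matrix.of C).rank = s →
      Function.Injective (Matrix.of C).mulVec := fun h =>
    mulVec_injective_of_rank_eq_card (h.trans (Fintype.card_fin s).symm)
  have hAk : Tendsto (fun k => Matrix.of (Ak k)) atTop (𝓝 (Matrix.of A)) := hlim.fst_nhds
  have hxk : Tendsto xk atTop (𝓝 x) := hlim.snd_nhds
  have hQk k := hQ (Ak k) (xk k) (hAk0 k) (hxk0 k) (hAkrank k)
  have hpinv k := (hQk k).pinv_submatrix_mulVec (hinj (hAkrank k)) (T := T₁) (by simp [hT₁ k])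
  have hAkT₁ : Tendsto (fun k => (Matrix.of (Ak k)).submatrix id (Subtype.val : T₁ → Fin s))
      atTop (𝓝 ((Matrix.of A).submatrix id Subtype.val)) :=
    ((continuous_id.matrix_submatrix id Subtype.val).tendsto _).comp hAk
  have hQT₁_lim := tendsto_pinv_mulVec
    (mulVec_injective_submatrix (hinj hArank) Subtype.val_injective) hAkT₁ hxk
  simp only [hpinv] at hQT₁_lim
  have hQ_lim := tendsto_dite_of_tendsto_restrict (T := T₁) (f := fun k => Q (Ak k) (xk k))
    (fun k j hj => (((hQk k).1 j).eq_of_not_lt (by simpa [hT₁ k] using hj)).symm) hQT₁_lim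
  have hQA : Q A x = fun j =>
      if h : j ∈ T₁ then (pinv ((Matrix.of A).submatrix id Subtype.val) *ᵥ x) ⟨j, h⟩ else 0 := (hQ A x hA0 hx0 hArank).eq_of_injective (hinj hArank)
    (IsNNLS.of_tendsto hQk hAk hxk hQ_lim)
  have hsub : T₀ ⊆ T₁ := fun j hj => by
    by_contra hj₁
    simp [hT₀, hQA, hj₁] at hj
  refine ⟨hsub.ssubset_of_ne hne, fun j hj hj₀ => ?_⟩
  have hQA_j := congrFun hQA j
  simp only [hj, dif_pos] at hQA_j
  rw [← hQA_j]
  exact (((hQ A x hA0 hx0 hArank).1 j).eq_of_not_lt (by simpa [hT₀] using hj₀)).symm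

/-- along a convergent sequence of full-column-rank nonnegative pairs with
constant support `T₁` whose limit has support `T₀ ≠ T₁`, one has `T₀ ⊊ T₁`, and the
entries of `A_{:,T₁}† x` at indices of `T₁ \ T₀` vanish. -/
theorem support_limit {r s : ℕ} (hrs : s ≤ r)
    (Q : (Fin r → Fin s → ℝ) → (Fin r → ℝ) → (Fin s → ℝ))
    (hQ : ∀ B y, (∀ i j, 0 ≤ B i j) → (∀ i, 0 ≤ y i) → (Matrix.of B).rank = s →
      IsNNLS (Matrix.of B) y (Q B y))
    (Ak : ℕ → Fin r → Fin s → ℝ) (xk : ℕ → Fin r → ℝ)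
    (A : Fin r → Fin s → ℝ) (x : Fin r → ℝ)
    (hAk0 : ∀ k i j, 0 ≤ Ak k i j) (hAkrank : ∀ k, (Matrix.of (Ak k)).rank = s)
    (hxk0 : ∀ k i, 0 ≤ xk k i)
    (hA0 : ∀ i j, 0 ≤ A i j) (hArank : (Matrix.of A).rank = s) (hx0 : ∀ i, 0 ≤ x i)
    (hlim : Filter.Tendsto (fun k => (Ak k, xk k)) Filter.atTop (nhds (A, x)))
    (T₀ T₁ : Finset (Fin s))
    (hT₁ : ∀ k, T₁ = Finset.univ.filter (fun j => 0 < Q (Ak k) (xk k) j))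
    (hT₀ : T₀ = Finset.univ.filter (fun j => 0 < Q A x j))
    (hne : T₀ ≠ T₁) :
    T₀ ⊂ T₁ ∧ ∀ j (hj : j ∈ T₁), j ∉ T₀ →
      (pinv ((Matrix.of A).submatrix id
        (Subtype.val : {j // j ∈ T₁} → Fin s))).mulVec x ⟨j, hj⟩ = 0 :=
  support_limit_general Q hQ Ak xk A x hAk0 hAkrank hxk0 hA0 hArank hx0 hlim T₀ T₁ hT₁ hT₀ hne
end

section
/- For fixed index set T ⊆ {1,…,s} and index i ∈ T, the map f(A, x) = (A_{:,T}† x)_{T(i)} defined on pairs (A,x) with A ∈ ℝ^{r×s} of full column rank has a surjective (full row rank) total derivative at every point; consequently the preimage under f of any Lebesgue-null subset of ℝ has Lebesgue measure zero. -/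
open Matrix MeasureTheory

/-!
Where the Gram matrix `A_Tᵀ A_T` is invertible, `A_T† = (A_Tᵀ A_T)⁻¹ A_Tᵀ` depends smoothly on `A`,
so `f` is differentiable there. For fixed `A`, `f (A, ·)` is the linear functional given by the
row `T(i)` of `A_T†`, which is onto because `A_T† A_T = 1`; already the partial derivative in `x`
is surjective. For the null sets, Fubini reduces to the `x`-slices, each of which is the preimage
of a null set under a surjective linear map.
-/

open Function Set

namespace Matrix

variable {m n K : Type*} [Fintype n]

theorem linearIndependent_cols_iff_rank_eq_card [Field K] {A : Matrix m n K} :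
    LinearIndependent K A.col ↔ A.rank = Fintype.card n := by
  rw [rank_eq_finrank_span_cols, linearIndependent_iff_card_eq_finrank_span, Set.finrank, eq_comm]

theorem rank_submatrix_col_eq_card [Field K] {n₀ : Type*} [Fintype n₀] {A : Matrix m n K}
    (hA : A.rank = Fintype.card n) {e : n₀ → n} (he : Injective e) :
    (A.submatrix id e).rank = Fintype.card n₀ :=
  linearIndependent_cols_iff_rank_eq_card.1
    ((linearIndependent_cols_iff_rank_eq_card.2 hA).comp e he)

variable [Fintype m] [DecidableEq n]

theorem isUnit_transpose_mul_self_iff [Field K] [LinearOrder K] [IsStrictOrderedRing K]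
    {A : Matrix m n K} : IsUnit (Aᵀ * A) ↔ A.rank = Fintype.card n := by
  rw [← linearIndependent_cols_iff_isUnit, linearIndependent_cols_iff_rank_eq_card,
    rank_transpose_mul_self]

theorem pinv_mul_self {A : Matrix m n ℝ} (hA : IsUnit (Aᵀ * A)) : pinv A * A = 1 := by
  rw [pinv, Matrix.mul_assoc, nonsing_inv_mul _ ((isUnit_iff_isUnit_det _).1 hA)]

theorem surjective_pinv_mulVec_apply {A : Matrix m n ℝ} (hA : IsUnit (Aᵀ * A)) (j : n) :
    Surjective fun x => (pinv A *ᵥ x) j := fun y =>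
  ⟨A *ᵥ Pi.single j y, by
    dsimp only
    rw [mulVec_mulVec, pinv_mul_self hA, one_mulVec, Pi.single_eq_same]⟩

end Matrix

theorem DifferentiableAt.surjective_fderiv_of_hasFDerivAt_right {𝕜 E F G : Type*}
    [NontriviallyNormedField 𝕜] [NormedAddCommGroup E] [NormedSpace 𝕜 E]
    [NormedAddCommGroup F] [NormedSpace 𝕜 F] [NormedAddCommGroup G] [NormedSpace 𝕜 G]
    {f : E × F → G} {p : E × F} (hf : DifferentiableAt 𝕜 f p) {ℓ : F →L[𝕜] G}
    (hℓ : HasFDerivAt (fun y => f (p.1, y)) ℓ p.2) (hsurj : Surjective ℓ) :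
    Surjective (fderiv 𝕜 f p) := by
  have hcomp : (fderiv 𝕜 f p).comp (ContinuousLinearMap.inr 𝕜 E F) = ℓ :=
    (hf.hasFDerivAt.comp p.2 (hasFDerivAt_prodMk_right p.1 p.2)).unique hℓ
  exact Surjective.of_comp (hcomp ▸ hsurj : Surjective (fderiv 𝕜 f p ∘ _))

theorem LinearMap.measure_preimage_null_of_surjective {𝕜 E F : Type*}
    [NontriviallyNormedField 𝕜] [CompleteSpace 𝕜]
    [NormedAddCommGroup E] [MeasurableSpace E] [BorelSpace E] [NormedSpace 𝕜 E]
    [LocallyCompactSpace E] [NormedAddCommGroup F] [MeasurableSpace F] [BorelSpace F]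
    [NormedSpace 𝕜 F] (μ : Measure E) (ν : Measure F) [μ.IsAddHaarMeasure] [ν.IsAddHaarMeasure]
    {L : E →ₗ[𝕜] F} (hL : Surjective L) {s : Set F} (hs : ν s = 0) : μ (L ⁻¹' s) = 0 := by
  have : FiniteDimensional 𝕜 E := .of_locallyCompactSpace 𝕜
  obtain ⟨c, -, hc⟩ := L.exists_map_addHaar_eq_smul_addHaar μ ν hL
  refine measure_mono_null (preimage_mono (subset_toMeasurable ν s)) ?_
  rw [← Measure.map_apply L.continuous_of_finiteDimensional.measurable
    (measurableSet_toMeasurable _ _), hc, Measure.smul_apply, measure_toMeasurable, hs, smul_zero]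

theorem ContinuousOn.measurableSet_inter_preimage {α γ : Type*} [TopologicalSpace α]
    [MeasurableSpace α] [OpensMeasurableSpace α] [TopologicalSpace γ] [MeasurableSpace γ]
    [BorelSpace γ] {f : α → γ} {s : Set α} {t : Set γ} (hf : ContinuousOn f s)
    (hs : MeasurableSet s) (ht : MeasurableSet t) : MeasurableSet (s ∩ f ⁻¹' t) := by
  have := hs.subtype_image ((continuousOn_iff_continuous_domRestrict.1 hf).measurable ht)
  rwa [domRestrict_eq, preimage_comp, Subtype.image_preimage_coe] at this

section

-- Any norm will do; this one makes `Matrix n n ℝ` a complete normed algebra.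
attribute [local instance] Matrix.linftyOpNormedAddCommGroup Matrix.linftyOpNormedSpace
  Matrix.linftyOpNormedRing Matrix.linftyOpNormedAlgebra

theorem differentiableAt_matrix_inv_apply {E n : Type*} [NormedAddCommGroup E] [NormedSpace ℝ E]
    [Fintype n] [DecidableEq n] {M : E → Matrix n n ℝ} {x : E}
    (hM : ∀ a b, DifferentiableAt ℝ (fun y => M y a b) x) (hx : IsUnit (M x)) (a b : n) :
    DifferentiableAt ℝ (fun y => (M y)⁻¹ a b) x := by
  let e := (ofLinearEquiv ℝ : (n → n → ℝ) ≃ₗ[ℝ] Matrix n n ℝ).toContinuousLinearEquiv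
  have hM' : DifferentiableAt ℝ M x :=
    e.differentiableAt.comp x (differentiableAt_pi.2 fun a => differentiableAt_pi.2 (hM a))
  have hinv := e.symm.differentiableAt.comp x (hM'.inverse hx)
  simp only [← nonsing_inv_eq_ringInverse] at hinv
  exact differentiableAt_pi.1 (differentiableAt_pi.1 hinv a) b

end

section PseudoinverseCoordinate

variable {D m n : Type*} [NormedAddCommGroup D] [NormedSpace ℝ D] [Fintype m] [Fintype n]
  [DecidableEq n] {M : D → Matrix m n ℝ}

theorem differentiableAt_pinv_apply {x : D} (hM : ∀ k l, DifferentiableAt ℝ (fun y => M y k l) x)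
    (hx : IsUnit ((M x)ᵀ * M x)) (a : n) (k : m) :
    DifferentiableAt ℝ (fun y => pinv (M y) a k) x := by
  have hgram : ∀ a b, DifferentiableAt ℝ (fun y => ((M y)ᵀ * M y) a b) x := fun a b => by
    simp only [mul_apply, transpose_apply]
    exact DifferentiableAt.fun_sum fun l _ => (hM l a).mul (hM l b)
  simp only [pinv, mul_apply, transpose_apply]
  exact DifferentiableAt.fun_sum fun l _ =>
    (differentiableAt_matrix_inv_apply hgram hx a l).mul (hM k l)

theorem differentiableAt_pinv_mulVec_apply (hM : ∀ k l, Differentiable ℝ fun d => M d k l)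
    {p : D × (m → ℝ)} (hp : IsUnit ((M p.1)ᵀ * M p.1)) (j : n) :
    DifferentiableAt ℝ (fun p : D × (m → ℝ) => (pinv (M p.1) *ᵥ p.2) j) p := by
  have hM' : ∀ k l, DifferentiableAt ℝ (fun q : D × (m → ℝ) => M q.1 k l) p := fun k l =>
    (hM k l).differentiableAt.comp p differentiableAt_fst
  simp only [mulVec, dotProduct]
  exact DifferentiableAt.fun_sum fun k _ =>
    (differentiableAt_pinv_apply hM' hp j k).mul (differentiableAt_pi.1 differentiableAt_snd k)

theorem measure_pinv_mulVec_preimage_inter_null [MeasurableSpace D] [BorelSpace D]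
    [SecondCountableTopology D] (μ : Measure D) [SFinite μ]
    (hM : ∀ k l, Differentiable ℝ fun d => M d k l) (j : n) {Z : Set ℝ} (hZ : volume Z = 0) :
    μ.prod volume ((fun p : D × (m → ℝ) => (pinv (M p.1) *ᵥ p.2) j) ⁻¹' Z ∩
      {p | IsUnit ((M p.1)ᵀ * M p.1)}) = 0 := by
  set V := {p : D × (m → ℝ) | IsUnit ((M p.1)ᵀ * M p.1)}
  have hV : IsOpen V := by
    simp only [V, isUnit_iff_isUnit_det, isUnit_iff_ne_zero]
    have hMc : Continuous fun p : D × (m → ℝ) => M p.1 :=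
      continuous_matrix fun k l => (hM k l).continuous.comp continuous_fst
    exact isOpen_ne_fun (hMc.matrix_transpose.matrix_mul hMc).matrix_det continuous_const
  have hcont : ContinuousOn (fun p : D × (m → ℝ) => (pinv (M p.1) *ᵥ p.2) j) V := fun p hp =>
    (differentiableAt_pinv_mulVec_apply hM hp j).continuousAt.continuousWithinAt
  refine measure_mono_null
    (inter_subset_inter_left _ (preimage_mono (subset_toMeasurable volume Z))) ?_
  rw [inter_comm, Measure.measure_prod_null
    (hcont.measurableSet_inter_preimage hV.measurableSet (measurableSet_toMeasurable _ _))]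
  refine Filter.Eventually.of_forall fun d => ?_
  by_cases hd : IsUnit ((M d)ᵀ * M d)
  · let L := LinearMap.proj j ∘ₗ (pinv (M d)).mulVecLin
    exact measure_mono_null (fun x hx => hx.2) (L.measure_preimage_null_of_surjective volume
      volume (surjective_pinv_mulVec_apply hd j) ((measure_toMeasurable Z).trans hZ))
  · simp [V, hd]

end PseudoinverseCoordinate

theorem submersion_preimage_null_general {r s : ℕ}
    (T : Finset (Fin s)) (i : Fin s) (hi : i ∈ T)
    (f : (Fin r → Fin s → ℝ) × (Fin r → ℝ) → ℝ)
    (hf : ∀ p, f p =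
      (pinv ((Matrix.of p.1).submatrix id
        (Subtype.val : {j // j ∈ T} → Fin s))).mulVec p.2 ⟨i, hi⟩) :
    (∀ p : (Fin r → Fin s → ℝ) × (Fin r → ℝ), (Matrix.of p.1).rank = s →
      ∃ L : ((Fin r → Fin s → ℝ) × (Fin r → ℝ)) →L[ℝ] ℝ,
        HasFDerivAt f L p ∧ Function.Surjective L) ∧
    ∀ Z : Set ℝ, volume Z = 0 →
      volume (f ⁻¹' Z ∩ {p | (Matrix.of p.1).rank = s}) = 0 := by
  set cols : (Fin r → Fin s → ℝ) → Matrix (Fin r) {j // j ∈ T} ℝ :=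
    fun A => (of A).submatrix id Subtype.val
  obtain rfl : f = fun p => (pinv (cols p.1) *ᵥ p.2) ⟨i, hi⟩ := funext hf
  have hcols : ∀ k l, Differentiable ℝ fun A => cols A k l := fun k l => by
    simp only [cols, submatrix_apply, id_eq, of_apply]
    fun_prop
  have hunit : ∀ A : Fin r → Fin s → ℝ, (of A).rank = s → IsUnit ((cols A)ᵀ * cols A) :=
    fun A hA => isUnit_transpose_mul_self_iff.2 <|
      rank_submatrix_col_eq_card (by rwa [Fintype.card_fin]) Subtype.val_injective
  refine ⟨fun p hp => ?_, fun Z hZ => ?_⟩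
  · have hdiff := differentiableAt_pinv_mulVec_apply hcols (hunit _ hp) ⟨i, hi⟩
    exact ⟨_, hdiff.hasFDerivAt, hdiff.surjective_fderiv_of_hasFDerivAt_right
      (LinearMap.proj _ ∘ₗ (pinv (cols p.1)).mulVecLin).toContinuousLinearMap.hasFDerivAt
      (surjective_pinv_mulVec_apply (hunit _ hp) _)⟩
  · rw [Measure.volume_eq_prod]
    exact measure_mono_null (inter_subset_inter_right _ fun p => hunit p.1)
      (measure_pinv_mulVec_preimage_inter_null volume hcols _ hZ)

/-- `f(A,x) = (A_{:,T}† x)_{T(i)}` has a surjective total derivative at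
every full-column-rank point; consequently preimages of Lebesgue-null subsets of `ℝ`
(within the full-rank set) are null. -/
theorem submersion_preimage_null {r s : ℕ} (hrs : s ≤ r)
    (T : Finset (Fin s)) (i : Fin s) (hi : i ∈ T)
    (f : (Fin r → Fin s → ℝ) × (Fin r → ℝ) → ℝ)
    (hf : ∀ p, f p =
      (pinv ((Matrix.of p.1).submatrix id
        (Subtype.val : {j // j ∈ T} → Fin s))).mulVec p.2 ⟨i, hi⟩) :
    (∀ p : (Fin r → Fin s → ℝ) × (Fin r → ℝ), (Matrix.of p.1).rank = s →
      ∃ L : ((Fin r → Fin s → ℝ) × (Fin r → ℝ)) →L[ℝ] ℝ,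
        HasFDerivAt f L p ∧ Function.Surjective L) ∧
    ∀ Z : Set ℝ, volume Z = 0 →
      volume (f ⁻¹' Z ∩ {p | (Matrix.of p.1).rank = s}) = 0 :=
  submersion_preimage_null_general T i hi f hf
end
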